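/- arXiv:1806.10660 — 2 statements merged into one kernel-verified Lean document; each statement's English description precedes it below -/
import Mathlib

section
/- Assume unit costs. There exists a permutation τ of Fin n whose expected nonadaptive cost for evaluating the score classification function f is at most 4·OPT(f); that is, the adaptivity gap of the unit-cost unweighted stochastic score classification problem is at most 4. -/
open Finset

/-- Number of true bits of an assignment. -/
def N1 {n : ℕ} (a : Fin n → Bool) : ℕ :=
  (Finset.univ.filter (fun i => a i = true)).card

/-- Probability of an assignment. -/
noncomputable def pr {n : ℕ} (p : Fin n → ℝ) (a : Fin n → Bool) : ℝ :=
  ∏ i, if a i then p i else 1 - p i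
/-- Binary decision trees over `n` bits, with natural-number leaf labels. -/
inductive DTree (n : ℕ) : Type where
  | leaf : ℕ → DTree n
  | node : Fin n → DTree n → DTree n → DTree n

namespace DTree

/-- Output of the tree on assignment `a`. -/
def eval {n : ℕ} : DTree n → (Fin n → Bool) → ℕ
  | .leaf v, _ => v
  | .node i t0 t1, a => if a i then eval t1 a else eval t0 a

/-- Total cost of the queries made on assignment `a`. -/
noncomputable def cost {n : ℕ} (c : Fin n → ℝ) : DTree n → (Fin n → Bool) → ℝ
  | .leaf _, _ => 0
  | .node i t0 t1, a => c i + (if a i then cost c t1 a else cost c t0 a)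

/-- The list of indices queried on assignment `a`, in order. -/
def path {n : ℕ} : DTree n → (Fin n → Bool) → List (Fin n)
  | .leaf _, _ => []
  | .node i t0 t1, a => i :: (if a i then path t1 a else path t0 a)

/-- No index occurs twice on any root-to-leaf path (given already-used indices). -/
def Proper {n : ℕ} : DTree n → Finset (Fin n) → Prop
  | .leaf _, _ => True
  | .node i t0 t1, used =>
      i ∉ used ∧ Proper t0 (insert i used) ∧ Proper t1 (insert i used)

/-- Every root-to-leaf path queries all `n` indices (and no repeats). -/
def Full {n : ℕ} : DTree n → Finset (Fin n) → Prop
  | .leaf _, used => used = Finset.univ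
  | .node i t0 t1, used =>
      i ∉ used ∧ Full t0 (insert i used) ∧ Full t1 (insert i used)

end DTree
/-- Expected-cost-minimizing value over all decision trees evaluating `h`. -/
noncomputable def OPTcost {n : ℕ} (p c : Fin n → ℝ) (h : (Fin n → Bool) → ℕ) : ℝ :=
  sInf {x : ℝ | ∃ T : DTree n, T.Proper ∅ ∧ (∀ a, T.eval a = h a) ∧
    x = ∑ a : Fin n → Bool, T.cost c a * pr p a}

/-- Nonadaptive cost of querying in the order given by the list `l` on assignment `a`:
the total cost of the shortest prefix of `l` whose outcomes determine the value `h a`. -/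
noncomputable def naCost {n : ℕ} (c : Fin n → ℝ) (h : (Fin n → Bool) → ℕ)
    (a : Fin n → Bool) (l : List (Fin n)) : ℝ :=
  ((l.take (sInf {k | ∀ b : Fin n → Bool,
      (∀ i ∈ l.take k, b i = a i) → h b = h a})).map c).sum

/-- Expected nonadaptive cost of the query order `l` for evaluating `h`. -/
noncomputable def naExpCost {n : ℕ} (p c : Fin n → ℝ) (h : (Fin n → Bool) → ℕ)
    (l : List (Fin n)) : ℝ :=
  ∑ a : Fin n → Bool, naCost c h a l * pr p a

/-!
If `f a = j`, every decision tree for `f` reads at least `α j` ones and `n + 1 - α (j + 1)` zeros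
of `a`, since otherwise completing the unread bits changes the class. For a threshold that
depends only on the number of ones, reading the bits in decreasing order of `p` minimises the
expected time until that many ones are seen, even among adaptive strategies: by induction on the
tree, after `m` queries no strategy is more likely to have seen enough ones than the `m` likeliest
bits, the inductive step being an exchange argument. Increasing order of `p` is likewise optimal
for zeros, so both expected times are at most `OPT`. Reading the two orders alternately costs at
most twice the sum of the two times, hence at most `4 OPT`.
-/

open Function

namespace DTree

variable {n : ℕ}

theorem path_node (i : Fin n) (t₀ t₁ : DTree n) (a : Fin n → Bool) :
    (node i t₀ t₁).path a = i :: (cond (a i) t₁ t₀).path a := by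
  cases h : a i <;> simp [path, h]

theorem notMem_of_mem_path {T : DTree n} {used : Finset (Fin n)} (hT : T.Proper used)
    {a : Fin n → Bool} {k : Fin n} (hk : k ∈ T.path a) : k ∉ used := by
  induction T generalizing used with
  | leaf => simp [path] at hk
  | node i t₀ t₁ ih₀ ih₁ =>
    obtain ⟨hi, h₀, h₁⟩ := hT
    rw [path_node, List.mem_cons] at hk
    rcases hk with rfl | hk
    · exact hi
    · cases hai : a i <;> rw [hai] at hk
      · exact fun h => ih₀ h₀ hk (mem_insert_of_mem h)
      · exact fun h => ih₁ h₁ hk (mem_insert_of_mem h)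

theorem path_update {T : DTree n} {used : Finset (Fin n)} (hT : T.Proper used)
    {k : Fin n} (hk : k ∈ used) (a : Fin n → Bool) (b : Bool) :
    T.path (update a k b) = T.path a := by
  induction T generalizing used with
  | leaf => rfl
  | node i t₀ t₁ ih₀ ih₁ =>
    obtain ⟨hi, h₀, h₁⟩ := hT
    rw [path_node, path_node, update_of_ne (ne_of_mem_of_not_mem hk hi).symm]
    cases a i
    · rw [cond_false, ih₀ h₀ (mem_insert_of_mem hk)]
    · rw [cond_true, ih₁ h₁ (mem_insert_of_mem hk)]

theorem eval_congr {T : DTree n} {a b : Fin n → Bool} (h : ∀ k ∈ T.path a, b k = a k) :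
    T.eval b = T.eval a := by
  induction T with
  | leaf => rfl
  | node i t₀ t₁ ih₀ ih₁ =>
    rw [path_node] at h
    have hi : b i = a i := h i List.mem_cons_self
    simp only [eval, hi]
    cases hai : a i <;> simp only [hai, cond_false, cond_true] at h ⊢
    · exact ih₀ fun k hk => h k (List.mem_cons_of_mem i hk)
    · exact ih₁ fun k hk => h k (List.mem_cons_of_mem i hk)

theorem cost_eq_length {c : Fin n → ℝ} (hc : ∀ i, c i = 1) (T : DTree n)
    (a : Fin n → Bool) :
    T.cost c a = (T.path a).length := by
  induction T with
  | leaf => simp [cost, path]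
  | node i t₀ t₁ ih₀ ih₁ =>
    rw [cost, path_node, hc]
    cases a i <;> simp [ih₀, ih₁, add_comm]

def mirror : DTree n → DTree n
  | leaf v => leaf v
  | node i t₀ t₁ => node i (mirror t₁) (mirror t₀)

theorem Proper.mirror {T : DTree n} {used : Finset (Fin n)} (hT : T.Proper used) :
    T.mirror.Proper used := by
  induction T generalizing used with
  | leaf => trivial
  | node i t₀ t₁ ih₀ ih₁ => exact ⟨hT.1, ih₁ hT.2.2, ih₀ hT.2.1⟩

theorem path_mirror (T : DTree n) (a : Fin n → Bool) : T.mirror.path a = T.path aᶜ := by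
  induction T with
  | leaf => rfl
  | node i t₀ t₁ ih₀ ih₁ =>
    simp only [mirror, path_node, Pi.compl_apply, Bool.compl_eq_bnot]
    cases a i <;> simp [ih₀, ih₁]

def ofList (h : (Fin n → Bool) → ℕ) : List (Fin n) → (Fin n → Bool) → DTree n
  | [], v => leaf (h v)
  | i :: l, v => node i (ofList h l (update v i false)) (ofList h l (update v i true))

theorem proper_ofList (h : (Fin n → Bool) → ℕ) {l : List (Fin n)} (hl : l.Nodup)
    {used : Finset (Fin n)} (hused : ∀ i ∈ l, i ∉ used) (v : Fin n → Bool) :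
    (ofList h l v).Proper used := by
  induction l generalizing used v with
  | nil => trivial
  | cons i l ih =>
    rw [List.nodup_cons] at hl
    have hused' : ∀ j ∈ l, j ∉ insert i used := fun j hj hmem =>
      (mem_insert.1 hmem).elim (fun h => hl.1 (h ▸ hj))
        (hused j (List.mem_cons_of_mem i hj))
    exact ⟨hused i List.mem_cons_self, ih hl.2 hused' _, ih hl.2 hused' _⟩

theorem eval_ofList (h : (Fin n → Bool) → ℕ) {l : List (Fin n)} {v a : Fin n → Bool}
    (hva : ∀ j ∉ l, v j = a j) : (ofList h l v).eval a = h a := by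
  induction l generalizing v with
  | nil => rw [ofList, eval, funext fun j => hva j List.not_mem_nil]
  | cons i l ih =>
    have key : ∀ j ∉ l, update v i (a i) j = a j := fun j hj => by
      rcases eq_or_ne j i with rfl | hji
      · simp
      · rw [update_of_ne hji]
        exact hva j (by simp [hji, hj])
    simp only [ofList, eval]
    cases hai : a i <;> simp only [Bool.false_eq_true, if_false, if_true] <;> exact ih (hai ▸ key)

theorem exists_proper_eval (h : (Fin n → Bool) → ℕ) :
    ∃ T : DTree n, T.Proper ∅ ∧ ∀ a, T.eval a = h a :=
  ⟨ofList h (List.finRange n) fun _ => false,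
    proper_ofList h (List.nodup_finRange n) (fun _ _ => notMem_empty _) _,
    fun _ => eval_ofList h fun j hj => absurd (List.mem_finRange j) hj⟩

end DTree
namespace AdaptivityGap

variable {n : ℕ}

section Ones

def ones (S : Finset (Fin n)) (a : Fin n → Bool) : ℕ := #{k ∈ S | a k = true}

theorem N1_eq_ones (a : Fin n → Bool) : N1 a = ones univ a := rfl

theorem ones_mono {S T : Finset (Fin n)} (h : S ⊆ T) (a : Fin n → Bool) :
    ones S a ≤ ones T a :=
  card_le_card (filter_subset_filter _ h)

theorem ones_le_card (S : Finset (Fin n)) (a : Fin n → Bool) : ones S a ≤ #S :=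
  card_filter_le _ _

theorem ones_congr {S : Finset (Fin n)} {a b : Fin n → Bool} (h : ∀ k ∈ S, a k = b k) :
    ones S a = ones S b :=
  congrArg card (filter_congr fun k hk => by rw [h k hk])

theorem ones_le_ones {S : Finset (Fin n)} {a b : Fin n → Bool}
    (h : ∀ k ∈ S, a k = true → b k = true) : ones S a ≤ ones S b :=
  card_le_card fun k hk => by
    rw [mem_filter] at hk ⊢
    exact ⟨hk.1, h k hk.1 hk.2⟩

theorem ones_insert {S : Finset (Fin n)} {i : Fin n} (hi : i ∉ S) (a : Fin n → Bool) :
    ones (insert i S) a = ones S a + (a i).toNat := by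
  unfold ones
  rw [filter_insert]
  cases a i
  · simp
  · simp [card_insert_of_notMem (fun h => hi (mem_filter.1 h).1)]

theorem ones_update_of_notMem {S : Finset (Fin n)} {i : Fin n} (hi : i ∉ S)
    (a : Fin n → Bool) (b : Bool) : ones S (update a i b) = ones S a :=
  ones_congr fun _ hk => update_of_ne (ne_of_mem_of_not_mem hk hi) _ _

theorem ones_add_ones_compl (S : Finset (Fin n)) (a : Fin n → Bool) :
    ones S a + ones S aᶜ = #S := by
  unfold ones
  simp only [Pi.compl_apply, Bool.compl_eq_bnot, Bool.not_eq_true']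
  simpa using card_filter_add_card_filter_not (s := S) (fun k => a k = true)

theorem N1_compl (a : Fin n → Bool) : N1 aᶜ = n - N1 a := by
  have := ones_add_ones_compl univ a
  rw [card_univ, Fintype.card_fin] at this
  rw [N1_eq_ones, N1_eq_ones]
  omega

theorem N1_le (a : Fin n → Bool) : N1 a ≤ n :=
  (ones_le_card univ a).trans_eq (card_fin n)

theorem N1_piecewise_false (S : Finset (Fin n)) (a : Fin n → Bool) :
    N1 (fun k => if k ∈ S then a k else false) = ones S a := by
  unfold N1 ones
  congr 1
  ext k
  by_cases hk : k ∈ S <;> simp [hk]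

theorem ones_comp_swap {S S' : Finset (Fin n)} {i j : Fin n}
    (h : ∀ k, k ∈ S' ↔ Equiv.swap i j k ∈ S) (a : Fin n → Bool) :
    ones S' (a ∘ Equiv.swap i j) = ones S a :=
  card_bij' (fun k _ => Equiv.swap i j k) (fun k _ => Equiv.swap i j k)
    (fun _ hk => by simp_all)
    (fun k hk => by simp_all [h (Equiv.swap i j k)])
    (fun k _ => Equiv.swap_apply_self i j k)
    (fun k _ => Equiv.swap_apply_self i j k)

end Ones


section Probability

variable {p : Fin n → ℝ}

theorem pr_nonneg (hp : ∀ i, p i ∈ Set.Icc 0 1) (a : Fin n → Bool) : 0 ≤ pr p a :=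
  prod_nonneg fun i _ => by
    have := hp i
    split <;> simp_all

theorem pr_compl (p : Fin n → ℝ) (a : Fin n → Bool) : pr (fun i => 1 - p i) aᶜ = pr p a :=
  prod_congr rfl fun i _ => by cases h : a i <;> simp [h]

noncomputable def prob (p : Fin n → ℝ) (E : (Fin n → Bool) → Prop) : ℝ :=
  open Classical in ∑ a, if E a then pr p a else 0

theorem prob_congr {E F : (Fin n → Bool) → Prop} (h : ∀ a, E a ↔ F a) :
    prob p E = prob p F := by
  rw [show E = F from funext fun a => propext (h a)]

theorem prob_mono (hp : ∀ i, p i ∈ Set.Icc 0 1) {E F : (Fin n → Bool) → Prop}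
    (h : ∀ a, E a → F a) : prob p E ≤ prob p F := by
  classical
  refine sum_le_sum fun a _ => ?_
  by_cases hE : E a
  · simp [hE, h a hE]
  · simp only [hE, if_false]
    split <;> simp [pr_nonneg hp a]

theorem prob_add_prob_not (p : Fin n → ℝ) (E : (Fin n → Bool) → Prop) :
    prob p E + prob p (fun a => ¬ E a) = ∑ a, pr p a := by
  classical
  unfold prob
  rw [← sum_add_distrib]
  exact sum_congr rfl fun a _ => by by_cases hE : E a <;> simp [hE]

theorem sum_pr_mul_card_filter (p : Fin n → ℝ) (s : Finset ℕ)
    (P : ℕ → (Fin n → Bool) → Prop) [∀ m a, Decidable (P m a)] :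
    ∑ a, pr p a * (#{m ∈ s | P m a} : ℝ) = ∑ m ∈ s, prob p (P m) := by
  classical
  simp only [card_filter, Nat.cast_sum, Nat.cast_ite, Nat.cast_one, Nat.cast_zero, mul_sum,
    mul_ite, mul_one, mul_zero, prob]
  rw [sum_comm]
  refine sum_congr rfl fun m _ => sum_congr rfl fun a _ => ?_
  congr

theorem prob_eq_add (p : Fin n → ℝ) (i : Fin n) (E : (Fin n → Bool) → Prop) :
    prob p E = prob p (fun a => a i = true ∧ E a) + prob p (fun a => a i = false ∧ E a) := by
  classical
  unfold prob
  rw [← sum_add_distrib]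
  exact sum_congr rfl fun a _ => by cases h : a i <;> simp [h]

theorem pr_eq_mul_prod_erase (p : Fin n → ℝ) (i : Fin n) (a : Fin n → Bool) :
    pr p a = (if a i then p i else 1 - p i) *
      ∏ k ∈ univ.erase i, (if a k then p k else 1 - p k) :=
  (mul_prod_erase univ _ (mem_univ i)).symm

theorem prob_coord_and {E : (Fin n → Bool) → Prop} (i : Fin n)
    (hE : ∀ a b, E (update a i b) ↔ E a) (b : Bool) :
    prob p (fun a => a i = b ∧ E a) = (if b then p i else 1 - p i) * prob p E := by
  classical
  set F : (Fin n → Bool) → ℝ :=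
    fun a => if E a then ∏ k ∈ univ.erase i, (if a k then p k else 1 - p k) else 0
  have hF : ∀ a c, F (update a i c) = F a := fun a c => by
    simp only [F, hE]
    congr 1
    exact prod_congr rfl fun k hk => by rw [update_of_ne (ne_of_mem_erase hk)]
  have hslice : ∀ b, prob p (fun a => a i = b ∧ E a)
      = (if b then p i else 1 - p i) * ∑ a, if a i = b then F a else 0 := fun b => by
    simp only [prob, mul_sum]
    refine sum_congr rfl fun a _ => ?_
    by_cases hb : a i = b <;> by_cases hEa : E a <;>
      simp [hb, hEa, F, pr_eq_mul_prod_erase p i a]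
  have hswap : ∑ a, (if a i = true then F a else 0) = ∑ a, if a i = false then F a else 0 := by
    have hinv : Involutive fun a : Fin n → Bool => update a i (!a i) := fun a => by simp
    refine Fintype.sum_bijective _ hinv.bijective _ _ fun a => ?_
    rw [hF]
    cases a i <;> simp
  have htotal : prob p E = ∑ a, if a i = true then F a else 0 := by
    rw [prob_eq_add p i, hslice, hslice, ← hswap]
    simp only [if_true, Bool.false_eq_true, if_false]
    ring
  rw [hslice, htotal]
  cases b
  · rw [hswap]
  · rfl

end Probability

section Exchange

variable {p : Fin n → ℝ}

def SymmetricOn (V : Finset (Fin n)) (w : (Fin n → Bool) → ℕ) : Prop :=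
  ∀ a b, (∀ k ∉ V, a k = b k) → ones V a = ones V b → w a = w b

theorem pr_le_pr_comp_swap (hp : ∀ i, p i ∈ Set.Icc 0 1) {i j : Fin n} (hij : i ≠ j)
    (hpij : p i ≤ p j) {a : Fin n → Bool} (hai : a i = true) (haj : a j = false) :
    pr p a ≤ pr p (a ∘ Equiv.swap i j) := by
  classical
  set R := ∏ k ∈ {i, j}ᶜ, (if a k then p k else 1 - p k)
  have hrest : ∏ k ∈ {i, j}ᶜ, (if (a ∘ Equiv.swap i j) k then p k else 1 - p k) = R :=
    prod_congr rfl fun k hk => by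
      simp only [mem_compl, mem_insert, mem_singleton, not_or] at hk
      simp [Equiv.swap_apply_of_ne_of_ne hk.1 hk.2]
  have hR : 0 ≤ R := prod_nonneg fun k _ => by
    have := hp k
    split <;> simp_all
  unfold pr
  rw [← prod_mul_prod_compl {i, j}, ← prod_mul_prod_compl {i, j}, hrest, prod_pair hij,
    prod_pair hij]
  simp only [comp_apply, Equiv.swap_apply_left, Equiv.swap_apply_right, hai, haj]
  simp only [if_true, Bool.false_eq_true, if_false]
  nlinarith [mul_nonneg (sub_nonneg.2 hpij) hR]

theorem sum_nonneg_of_involutive {α : Type*} [Fintype α] {e : α → α} (he : Involutive e)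
    {D : α → ℝ} (hD : ∀ a, 0 ≤ D a + D (e a)) : 0 ≤ ∑ a, D a := by
  have hsym : ∑ a, D (e a) = ∑ a, D a := Fintype.sum_bijective e he.bijective _ _ fun _ => rfl
  have := sum_nonneg fun a (_ : a ∈ univ) => hD a
  rw [sum_add_distrib, hsym] at this
  linarith

theorem SymmetricOn.comp_swap {V : Finset (Fin n)} {w : (Fin n → Bool) → ℕ}
    (hw : SymmetricOn V w) {i j : Fin n} (hi : i ∈ V) (hj : j ∈ V) (a : Fin n → Bool) :
    w (a ∘ Equiv.swap i j) = w a :=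
  hw _ _ (fun k hk => by
      simp [Equiv.swap_apply_of_ne_of_ne (ne_of_mem_of_not_mem hi hk).symm
        (ne_of_mem_of_not_mem hj hk).symm])
    (ones_comp_swap (fun k => by
      rcases eq_or_ne k i with rfl | hki
      · simp [hi, hj]
      rcases eq_or_ne k j with rfl | hkj
      · simp [hi, hj]
      · simp [Equiv.swap_apply_of_ne_of_ne hki hkj]) a)

theorem ones_insert_erase_comp_swap {S : Finset (Fin n)} {i j : Fin n} (hiS : i ∈ S)
    (hjS : j ∉ S) (a : Fin n → Bool) :
    ones (insert j (S.erase i)) (a ∘ Equiv.swap i j) = ones S a :=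
  ones_comp_swap (fun k => by
    rcases eq_or_ne k i with rfl | hki
    · simp [hjS, ne_of_mem_of_not_mem hiS hjS]
    rcases eq_or_ne k j with rfl | hkj
    · simp [hiS]
    · simp [Equiv.swap_apply_of_ne_of_ne hki hkj, hki, hkj]) a

theorem ones_comp_swap_le {S : Finset (Fin n)} {i j : Fin n} (hjS : j ∉ S) {a : Fin n → Bool}
    (haj : a j = false) : ones S (a ∘ Equiv.swap i j) ≤ ones S a :=
  ones_le_ones fun k hk hak => by
    rcases eq_or_ne k i with rfl | hki
    · simp [haj] at hak
    · simpa [Equiv.swap_apply_of_ne_of_ne hki (ne_of_mem_of_not_mem hk hjS)] using hak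

/-- Pairing `a` with `a ∘ swap i j`: the assignments on which replacing `i` by `j` gains are at
least as likely as those on which it loses. -/
theorem prob_le_prob_exchange (hp : ∀ i, p i ∈ Set.Icc 0 1) {V S : Finset (Fin n)}
    {w : (Fin n → Bool) → ℕ} (hw : SymmetricOn V w) {i j : Fin n} (hiV : i ∈ V)
    (hjV : j ∈ V) (hiS : i ∈ S) (hjS : j ∉ S) (hpij : p i ≤ p j) :
    prob p (fun a => w a ≤ ones S a) ≤
      prob p (fun a => w a ≤ ones (insert j (S.erase i)) a) := by
  classical
  set e : (Fin n → Bool) → Fin n → Bool := fun a => a ∘ Equiv.swap i j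
  have he : Involutive e := fun a => by ext k; simp [e]
  set D : (Fin n → Bool) → ℝ := fun a => if w a ≤ ones S a then pr p (e a) - pr p a else 0
  have hdiff : prob p (fun a => w a ≤ ones (insert j (S.erase i)) a)
      - prob p (fun a => w a ≤ ones S a) = ∑ a, D a := by
    have hre : prob p (fun a => w a ≤ ones (insert j (S.erase i)) a)
        = ∑ a, if w a ≤ ones S a then pr p (e a) else 0 :=
      (Fintype.sum_bijective e he.bijective _ _ fun a => by
        simp only [e, hw.comp_swap hiV hjV, ones_insert_erase_comp_swap hiS hjS]).symm
    rw [hre, prob, ← sum_sub_distrib]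
    exact sum_congr rfl fun a _ => by split <;> simp [D, *]
  have hgain : ∀ a, a i = true → a j = false → 0 ≤ D a + D (e a) := fun a hai haj => by
    have hpr := pr_le_pr_comp_swap hp (ne_of_mem_of_not_mem hiS hjS) hpij hai haj
    have hones := ones_comp_swap_le (i := i) hjS haj
    simp only [D, he a, e, hw.comp_swap hiV hjV] at hpr hones ⊢
    split_ifs <;> first | omega | linarith
  have hpair : ∀ a, 0 ≤ D a + D (e a) := fun a => by
    have hfix : a i = a j → e a = a := fun h => funext (Equiv.apply_swap_eq_self h)
    cases hai : a i <;> cases haj : a j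
    · simp [D, hfix (hai.trans haj.symm)]
    · simpa [he a, add_comm] using hgain (e a) (by simp [e, haj]) (by simp [e, hai])
    · exact hgain a hai haj
    · simp [D, hfix (hai.trans haj.symm)]
  linarith [sum_nonneg_of_involutive he hpair]

end Exchange

section Greedy

variable (σ : Equiv.Perm (Fin n))

def topIn (V : Finset (Fin n)) (k : ℕ) : Finset (Fin n) :=
  (((List.ofFn σ).filter (· ∈ V)).take k).toFinset

theorem nodup_filter_ofFn (V : Finset (Fin n)) : ((List.ofFn σ).filter (· ∈ V)).Nodup :=
  (List.nodup_ofFn.2 σ.injective).filter _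

theorem mem_filter_ofFn {V : Finset (Fin n)} {x : Fin n} :
    x ∈ (List.ofFn σ).filter (· ∈ V) ↔ x ∈ V := by
  simpa [List.mem_filter, List.mem_ofFn] using fun _ => σ.surjective x

theorem topIn_subset (V : Finset (Fin n)) (k : ℕ) : topIn σ V k ⊆ V := fun _ hx =>
  (mem_filter_ofFn σ).1 (List.mem_of_mem_take (List.mem_toFinset.1 hx))

theorem topIn_mono (V : Finset (Fin n)) {k k' : ℕ} (h : k ≤ k') :
    topIn σ V k ⊆ topIn σ V k' :=
  fun _ hx => by
    simp only [topIn, List.mem_toFinset] at hx ⊢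
    exact List.take_subset_take_left _ h hx

theorem card_topIn_le (V : Finset (Fin n)) (k : ℕ) : #(topIn σ V k) ≤ k :=
  (List.toFinset_card_le _).trans (List.length_take_le _ _)

theorem card_topIn {V : Finset (Fin n)} {k : ℕ} (hk : k ≤ #V) : #(topIn σ V k) = k := by
  have hlen : ((List.ofFn σ).filter (· ∈ V)).length = #V := by
    rw [← List.toFinset_card_of_nodup (nodup_filter_ofFn σ V)]
    congr 1
    ext x
    simp only [List.mem_toFinset, mem_filter_ofFn σ]
  rw [topIn, List.toFinset_card_of_nodup ((nodup_filter_ofFn σ V).sublist (List.take_sublist _ _)),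
    List.length_take, hlen, min_eq_left hk]

theorem symm_lt_symm_of_mem_topIn {V : Finset (Fin n)} {k : ℕ} {i j : Fin n}
    (hj : j ∈ topIn σ V k) (hiV : i ∈ V) (hi : i ∉ topIn σ V k) :
    σ.symm j < σ.symm i := by
  set l := (List.ofFn σ).filter (· ∈ V)
  have hsorted : l.Pairwise (fun x y => σ.symm x < σ.symm y) :=
    (List.pairwise_ofFn.2 fun _ _ h => by simpa using h).filter _
  rw [← List.take_append_drop k l, List.pairwise_append] at hsorted
  refine hsorted.2.2 j (List.mem_toFinset.1 hj) i ?_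
  have hil : i ∈ l := (mem_filter_ofFn σ).2 hiV
  rw [← List.take_append_drop k l, List.mem_append] at hil
  exact hil.resolve_left fun h => hi (List.mem_toFinset.2 h)

theorem mem_take_ofFn {K : ℕ} {x : Fin n} :
    x ∈ (List.ofFn fun t => σ t).take K ↔ (σ.symm x : ℕ) < K := by
  simp only [List.mem_take_iff_getElem, List.getElem_ofFn, List.length_ofFn]
  constructor
  · rintro ⟨t, ht, rfl⟩
    simp only [Equiv.symm_apply_apply]
    omega
  · intro h
    exact ⟨σ.symm x, by omega, by simp⟩

theorem mem_topIn_univ {m : ℕ} {x : Fin n} : x ∈ topIn σ univ m ↔ (σ.symm x : ℕ) < m := by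
  simp only [topIn, List.mem_toFinset, mem_univ, decide_true, List.filter_true]
  exact mem_take_ofFn σ

variable {p : Fin n → ℝ}

theorem prob_le_prob_topIn (hp : ∀ i, p i ∈ Set.Icc 0 1) (hσ : Antitone (p ∘ σ))
    {V S : Finset (Fin n)} {w : (Fin n → Bool) → ℕ} (hw : SymmetricOn V w) (hSV : S ⊆ V)
    {k : ℕ} (hk : #S ≤ k) :
    prob p (fun a => w a ≤ ones S a) ≤ prob p (fun a => w a ≤ ones (topIn σ V k) a) := by
  refine le_trans ?_
    (prob_mono hp fun a (h : w a ≤ _) => h.trans (ones_mono (topIn_mono σ V hk) a))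
  clear hk
  induction hd : #(S \ topIn σ V #S) using Nat.strong_induction_on generalizing S with
  | _ d ih =>
    set M := topIn σ V #S
    have hM : #M = #S := card_topIn σ (card_le_card hSV)
    by_cases hSM : S ⊆ M
    · rw [eq_of_subset_of_card_le hSM hM.le]
    obtain ⟨i, hiS, hiM⟩ := not_subset.1 hSM
    obtain ⟨j, hjM, hjS⟩ : ∃ j ∈ M, j ∉ S := by
      by_contra! hMS
      exact hiM (eq_of_subset_of_card_le hMS hM.ge ▸ hiS)
    have hjV : j ∈ V := topIn_subset σ V #S hjM
    have hpij : p i ≤ p j := by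
      simpa using hσ (symm_lt_symm_of_mem_topIn σ hjM (hSV hiS) hiM).le
    have hcard : #(insert j (S.erase i)) = #S := by
      rw [card_insert_of_notMem fun h => hjS (mem_of_mem_erase h), card_erase_of_mem hiS,
        Nat.sub_add_cancel (card_pos.2 ⟨i, hiS⟩)]
    have hsub : insert j (S.erase i) ⊆ V :=
      insert_subset hjV ((erase_subset i S).trans hSV)
    have hlt : #(insert j (S.erase i) \ M) < d := by
      rw [← hd]
      refine card_lt_card ⟨fun x hx => ?_, fun h => ?_⟩
      · simp only [mem_sdiff, mem_insert, mem_erase] at hx ⊢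
        rcases hx with ⟨rfl | ⟨-, hx⟩, hxM⟩
        · exact absurd hjM hxM
        · exact ⟨hx, hxM⟩
      · simpa [hiM, ne_of_mem_of_not_mem hiS hjS] using h (mem_sdiff.2 ⟨hiS, hiM⟩)
    have := ih _ hlt hsub (by rw [hcard])
    rw [hcard] at this
    exact (prob_le_prob_exchange hp hw (hSV hiS) hjV hiS hjS hpij).trans this

end Greedy

section Adaptive

variable {p : Fin n → ℝ}

theorem SymmetricOn.erase {V : Finset (Fin n)} {w : (Fin n → Bool) → ℕ} (hw : SymmetricOn V w)
    {i : Fin n} (hi : i ∈ V) (b : Bool) :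
    SymmetricOn (V.erase i) fun a => w (update a i b) - b.toNat := by
  intro a a' hout hones
  have hV : ∀ x : Fin n → Bool, ones V (update x i b) = ones (V.erase i) x + b.toNat := by
    intro x
    rw [← insert_erase hi, ones_insert (notMem_erase i V), insert_erase hi,
      ones_update_of_notMem (notMem_erase i V), update_self]
  have key : w (update a i b) = w (update a' i b) := hw _ _ (fun k hk => by
      rw [update_of_ne (ne_of_mem_of_not_mem hi hk).symm,
        update_of_ne (ne_of_mem_of_not_mem hi hk).symm]
      exact hout k fun h => hk (mem_of_mem_erase h))
    (by rw [hV, hV, hones])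
  simp only [key]

theorem prob_le_ones_insert (p : Fin n → ℝ) (w : (Fin n → Bool) → ℕ) {i : Fin n}
    (S : Bool → (Fin n → Bool) → Finset (Fin n)) (hi : ∀ b a, i ∉ S b a)
    (hS : ∀ b a c, S b (update a i c) = S b a) :
    prob p (fun a => w a ≤ ones (insert i (S (a i) a)) a)
      = p i * prob p (fun a => w (update a i true) - (true).toNat ≤ ones (S true a) a)
        + (1 - p i) *
          prob p (fun a => w (update a i false) - (false).toNat ≤ ones (S false a) a) := by
  have hbranch : ∀ b, prob p (fun a => a i = b ∧ w a ≤ ones (insert i (S (a i) a)) a)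
      = (if b then p i else 1 - p i) *
          prob p (fun a => w (update a i b) - b.toNat ≤ ones (S b a) a) := fun b => by
    rw [← prob_coord_and i (fun a c => by rw [update_idem, hS, ones_update_of_notMem (hi b a)])]
    refine prob_congr fun a => and_congr_right fun hab => ?_
    rw [ones_insert (hi _ a), ← hab, update_eq_self, hab, Nat.sub_le_iff_le_add]
  rw [prob_eq_add p i, hbranch, hbranch]
  rfl

/-- Conditioning on the root query `i` leaves in each branch a symmetric threshold on the unused
coordinates, so by induction both branches are dominated by the same set `M`; then `insert i M`
has `m + 1` elements and the greedy bound applies. -/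
theorem prob_le_ones_path_take_le (σ : Equiv.Perm (Fin n)) (hp : ∀ i, p i ∈ Set.Icc 0 1)
    (hσ : Antitone (p ∘ σ)) {T : DTree n} {used : Finset (Fin n)} (hT : T.Proper used) (m : ℕ)
    {w : (Fin n → Bool) → ℕ} (hw : SymmetricOn usedᶜ w) :
    prob p (fun a => w a ≤ ones ((T.path a).take m).toFinset a)
      ≤ prob p (fun a => w a ≤ ones (topIn σ usedᶜ m) a) := by
  induction T generalizing used m w with
  | leaf => exact prob_mono hp fun a h => h.trans (ones_mono (by simp [DTree.path]) a)
  | node i t₀ t₁ ih₀ ih₁ =>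
    obtain ⟨hi, h₀, h₁⟩ := hT
    rcases m with _ | m
    · exact prob_mono hp fun a h => h.trans (ones_mono (by simp) a)
    have hcompl : (insert i used)ᶜ = usedᶜ.erase i := compl_insert
    have hiV : i ∈ usedᶜ := mem_compl.2 hi
    set M := topIn σ (insert i used)ᶜ m
    have hiM : i ∉ M := fun h => by simpa [hcompl] using topIn_subset σ _ m h
    have hsplit := prob_le_ones_insert p w (i := i)
      (fun b a => (((cond b t₁ t₀).path a).take m).toFinset)
      (fun b a h => DTree.notMem_of_mem_path (by cases b <;> assumption)
        (List.mem_of_mem_take (List.mem_toFinset.1 h)) (mem_insert_self i used))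
      (fun b a c => by
        rw [DTree.path_update (by cases b <;> assumption) (mem_insert_self i used)])
    have hsplitM :=
      prob_le_ones_insert p w (i := i) (fun _ _ => M) (fun _ _ => hiM) fun _ _ _ => rfl
    simp only [DTree.path_node, List.take_succ_cons, List.toFinset_cons, cond_true, cond_false]
      at hsplit ⊢
    rw [hsplit]
    calc _ ≤ p i * prob p (fun a => w (update a i true) - (true).toNat ≤ ones M a)
          + (1 - p i) * prob p (fun a => w (update a i false) - (false).toNat ≤ ones M a) := by
          have := hp i
          exact add_le_add
            (mul_le_mul_of_nonneg_left (ih₁ h₁ m (hcompl ▸ hw.erase hiV true)) this.1)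
            (mul_le_mul_of_nonneg_left (ih₀ h₀ m (hcompl ▸ hw.erase hiV false))
              (sub_nonneg.2 this.2))
      _ = prob p (fun a => w a ≤ ones (insert i M) a) := hsplitM.symm
      _ ≤ _ := prob_le_prob_topIn σ hp hσ hw
          (insert_subset hiV ((topIn_subset σ _ m).trans (hcompl ▸ erase_subset i _)))
          ((card_insert_le i M).trans (by simpa using card_topIn_le σ _ m))

end Adaptive

section StoppingTime

variable {p : Fin n → ℝ}

def stopTime (σ : Equiv.Perm (Fin n)) (w : (Fin n → Bool) → ℕ) (a : Fin n → Bool) : ℕ :=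
  #{m ∈ range n | ¬ w a ≤ ones (topIn σ univ m) a}

theorem card_filter_not_of_monotone {Q : ℕ → Prop} [DecidablePred Q] (hQ : Monotone Q) {N : ℕ}
    (hN : Q N) : Q #{m ∈ range N | ¬ Q m} := by
  have hex : ∃ k, Q k := ⟨N, hN⟩
  have hrange : {m ∈ range N | ¬ Q m} = range (Nat.find hex) := by
    ext m
    simp only [mem_filter, mem_range]
    refine ⟨fun ⟨_, hm⟩ => not_le.1 fun h => hm (hQ h (Nat.find_spec hex)), fun hm => ?_⟩
    exact ⟨hm.trans_le (Nat.find_min' hex hN), Nat.find_min hex hm⟩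
  rw [hrange, card_range]
  exact Nat.find_spec hex

theorem topIn_univ_self (σ : Equiv.Perm (Fin n)) : topIn σ univ n = univ :=
  eq_univ_of_forall fun x => (mem_topIn_univ σ).2 (σ.symm x).isLt

theorem le_ones_topIn_stopTime (σ : Equiv.Perm (Fin n)) {w : (Fin n → Bool) → ℕ}
    {a : Fin n → Bool} (hwa : w a ≤ N1 a) : w a ≤ ones (topIn σ univ (stopTime σ w a)) a :=
  card_filter_not_of_monotone
    (fun _ _ hmm' (h : w a ≤ _) => h.trans (ones_mono (topIn_mono σ univ hmm') a))
    (by rwa [topIn_univ_self])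

theorem card_filter_not_le_ones_take_le_length {l : List (Fin n)} {a : Fin n → Bool} {v : ℕ}
    (hl : v ≤ ones l.toFinset a) (N : ℕ) :
    #{m ∈ range N | ¬ v ≤ ones (l.take m).toFinset a} ≤ l.length := by
  refine (card_le_card fun m hm => ?_).trans (card_range l.length).le
  rw [mem_filter] at hm
  exact mem_range.2 (not_le.1 fun h => hm.2 (by rwa [List.take_of_length_le h]))

theorem sum_pr_mul_stopTime_le (σ : Equiv.Perm (Fin n)) (hp : ∀ i, p i ∈ Set.Icc 0 1)
    (hσ : Antitone (p ∘ σ)) {w : (Fin n → Bool) → ℕ} (hw : SymmetricOn univ w)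
    {T : DTree n} (hT : T.Proper ∅) (hpath : ∀ a, w a ≤ ones (T.path a).toFinset a) :
    ∑ a, pr p a * (stopTime σ w a : ℝ) ≤ ∑ a, pr p a * ((T.path a).length : ℝ) := by
  have hmiss : ∀ m, prob p (fun a => ¬ w a ≤ ones (topIn σ univ m) a)
      ≤ prob p (fun a => ¬ w a ≤ ones ((T.path a).take m).toFinset a) := fun m => by
    have := prob_le_ones_path_take_le σ hp hσ hT m (compl_empty (α := Fin n) ▸ hw)
    rw [compl_empty] at this
    linarith [prob_add_prob_not p fun a => w a ≤ ones (topIn σ univ m) a,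
      prob_add_prob_not p fun a => w a ≤ ones ((T.path a).take m).toFinset a]
  calc ∑ a, pr p a * (stopTime σ w a : ℝ)
      = ∑ m ∈ range n, prob p (fun a => ¬ w a ≤ ones (topIn σ univ m) a) :=
        sum_pr_mul_card_filter p _ _
    _ ≤ ∑ m ∈ range n, prob p (fun a => ¬ w a ≤ ones ((T.path a).take m).toFinset a) :=
        sum_le_sum fun m _ => hmiss m
    _ = ∑ a, pr p a * (#{m ∈ range n | ¬ w a ≤ ones ((T.path a).take m).toFinset a} : ℝ) :=
        (sum_pr_mul_card_filter p _ _).symm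
    _ ≤ ∑ a, pr p a * ((T.path a).length : ℝ) := sum_le_sum fun a _ =>
        mul_le_mul_of_nonneg_left
          (by exact_mod_cast card_filter_not_le_ones_take_le_length (hpath a) n) (pr_nonneg hp a)

/-- Apply the bound for ones to the probabilities `1 - p` and the mirrored tree. -/
theorem sum_pr_mul_stopTime_compl_le (σ : Equiv.Perm (Fin n)) (hp : ∀ i, p i ∈ Set.Icc 0 1)
    (hσ : Monotone (p ∘ σ)) {w : (Fin n → Bool) → ℕ} (hw : SymmetricOn univ w)
    {T : DTree n} (hT : T.Proper ∅) (hpath : ∀ a, w aᶜ ≤ ones (T.path a).toFinset aᶜ) :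
    ∑ a, pr p a * (stopTime σ w aᶜ : ℝ) ≤ ∑ a, pr p a * ((T.path a).length : ℝ) := by
  have hp' : ∀ i, 1 - p i ∈ Set.Icc 0 1 := fun i => by
    have := hp i
    constructor <;> linarith [this.1, this.2]
  have h := sum_pr_mul_stopTime_le σ hp' (fun _ _ hxy => by
    simp only [comp_apply, sub_le_sub_iff_left]; exact hσ hxy) hw hT.mirror
    fun a => by simpa [DTree.path_mirror] using hpath aᶜ
  have hcompl : ∀ g : (Fin n → Bool) → ℝ,
      ∑ a, pr p a * g aᶜ = ∑ a, pr (fun i => 1 - p i) a * g a :=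
    fun g => Fintype.sum_bijective _ compl_involutive.bijective _ _ fun a => by rw [pr_compl]
  simp only [DTree.path_mirror] at h
  rw [hcompl fun a => (stopTime σ w a : ℝ)]
  refine h.trans_eq ?_
  rw [← hcompl fun a => ((T.path aᶜ).length : ℝ)]
  simp only [compl_compl]

end StoppingTime

section Interleave

/-- Position `j` of the front half goes to the even slot `2j`, position `n - 1 - j` of the back
half to the odd slot `2j + 1`. -/
def interleavePos (j : Fin n) : Fin n :=
  ⟨if 2 * (j : ℕ) < n then 2 * j else 2 * (n - 1 - j) + 1, by split <;> omega⟩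

theorem interleavePos_injective : Injective (interleavePos (n := n)) := fun j k h => by
  have hjk := congrArg Fin.val h
  simp only [interleavePos] at hjk
  ext
  split_ifs at hjk <;> omega

theorem interleavePos_lt {j : Fin n} {m : ℕ} (h : (j : ℕ) < m ∨ n - 1 - j < m) :
    (interleavePos j : ℕ) < 2 * m := by
  simp only [interleavePos]
  split_ifs <;> omega

noncomputable def interleave : Equiv.Perm (Fin n) :=
  Equiv.ofBijective interleavePos (Finite.injective_iff_bijective.1 interleavePos_injective)

end Interleave

section IntervalClassifier

variable {f : (Fin n → Bool) → ℕ} {lo hi : ℕ → ℕ}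

def IsIntervalClassifier (f : (Fin n → Bool) → ℕ) (lo hi : ℕ → ℕ) : Prop :=
  ∀ a b, f b = f a ↔ lo (f a) ≤ N1 b ∧ N1 b < hi (f a)

namespace IsIntervalClassifier

variable (hf : IsIntervalClassifier f lo hi)
include hf

theorem N1_bounds (a : Fin n → Bool) : lo (f a) ≤ N1 a ∧ N1 a < hi (f a) := (hf a a).1 rfl

theorem eq_of_N1_eq {a b : Fin n → Bool} (h : N1 a = N1 b) : f a = f b :=
  ((hf a b).2 (h ▸ hf.N1_bounds a)).symm

theorem symmetricOn_lo : SymmetricOn univ fun a => lo (f a) :=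
  fun _ _ _ hab => congrArg lo (hf.eq_of_N1_eq hab)

theorem symmetricOn_hi_compl : SymmetricOn univ fun a => n + 1 - hi (f aᶜ) :=
  fun a b _ hab => congrArg (fun v => n + 1 - hi v) (hf.eq_of_N1_eq (a := aᶜ) (b := bᶜ)
    (by rw [N1_compl, N1_compl, N1_eq_ones, N1_eq_ones, hab]))

/-- Completing the unread bits by zeros, resp. ones, must not change the class. -/
theorem le_ones_path {T : DTree n} (hT : ∀ a, T.eval a = f a) (a : Fin n → Bool) :
    lo (f a) ≤ ones (T.path a).toFinset a ∧
      n + 1 - hi (f a) ≤ ones (T.path a).toFinset aᶜ := by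
  set P := (T.path a).toFinset
  have hext : ∀ c : Bool, f (fun k => if k ∈ P then a k else c) = f a := fun c => by
    rw [← hT, ← hT]
    exact DTree.eval_congr fun k hk => by simp [P, hk]
  have hzero := ((hf _ _).1 (hext false)).1
  have hone := ((hf _ _).1 (hext true)).2
  have hcompl : (fun k => if k ∈ P then a k else true)ᶜ =
      fun k => if k ∈ P then aᶜ k else false := by
    ext k
    by_cases hk : k ∈ P <;> simp [hk]
  have := N1_compl (fun k => if k ∈ P then a k else true)
  rw [hcompl, N1_piecewise_false] at this
  rw [N1_piecewise_false] at hzero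
  have := ones_le_card P aᶜ
  have := card_le_univ P
  rw [Fintype.card_fin] at this
  omega

end IsIntervalClassifier

end IntervalClassifier

section Nonadaptive

variable {p c : Fin n → ℝ} {f : (Fin n → Bool) → ℕ} {lo hi : ℕ → ℕ}

theorem naCost_le_of_forall (hc : ∀ i, c i = 1) {h : (Fin n → Bool) → ℕ}
    {a : Fin n → Bool} {l : List (Fin n)} {K : ℕ}
    (hK : ∀ b, (∀ i ∈ l.take K, b i = a i) → h b = h a) :
    naCost c h a l ≤ K := by
  rw [naCost, show c = fun _ => 1 from funext hc]
  simp only [List.map_const', List.sum_replicate, nsmul_eq_mul, mul_one, List.length_take]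
  have hmem : K ∈ {k | ∀ b : Fin n → Bool, (∀ i ∈ l.take k, b i = a i) → h b = h a} :=
    hK
  exact_mod_cast (min_le_left _ _).trans (Nat.sInf_le hmem)

theorem naCost_interleave_le (hc : ∀ i, c i = 1) (hf : IsIntervalClassifier f lo hi)
    (σ : Equiv.Perm (Fin n)) (a : Fin n → Bool) :
    naCost c f a (List.ofFn fun t => (interleave.symm.trans σ) t)
      ≤ 2 * (stopTime σ (fun a => lo (f a)) a : ℝ)
        + 2 * (stopTime (Fin.revPerm.trans σ) (fun a => n + 1 - hi (f aᶜ)) aᶜ : ℝ) := by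
  set s₁ := stopTime σ (fun a => lo (f a)) a
  set s₀ := stopTime (Fin.revPerm.trans σ) (fun a => n + 1 - hi (f aᶜ)) aᶜ
  have hK := naCost_le_of_forall (c := c) (h := f) (a := a)
    (l := List.ofFn fun t => (interleave.symm.trans σ) t) (K := 2 * s₁ + 2 * s₀) hc ?_
  · push_cast at hK
    exact hK
  intro b hb
  have hread : ∀ m x, ((σ.symm x : ℕ) < m ∨ n - 1 - σ.symm x < m) →
      2 * m ≤ 2 * s₁ + 2 * s₀ → b x = a x := fun m x hx hm =>
    hb x ((mem_take_ofFn _).2 (by simpa [interleave] using (interleavePos_lt hx).trans_le hm))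
  have hones : lo (f a) ≤ N1 b := by
    rw [N1_eq_ones]
    refine le_trans ?_ (ones_mono (subset_univ (topIn σ univ s₁)) b)
    rw [ones_congr fun x hx => hread s₁ x (Or.inl ((mem_topIn_univ σ).1 hx)) (by omega)]
    exact le_ones_topIn_stopTime σ (w := fun a => lo (f a)) (hf.N1_bounds a).1
  have hzeros : n + 1 - hi (f a) ≤ N1 bᶜ := by
    rw [N1_eq_ones]
    refine le_trans ?_ (ones_mono (subset_univ (topIn (Fin.revPerm.trans σ) univ s₀)) bᶜ)
    rw [ones_congr (b := aᶜ) fun x hx => by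
      rw [Pi.compl_apply, Pi.compl_apply, hread s₀ x (Or.inr (by
        simpa [Fin.val_rev, Nat.sub_sub, add_comm] using (mem_topIn_univ _).1 hx)) (by omega)]]
    have := le_ones_topIn_stopTime (Fin.revPerm.trans σ) (w := fun a => n + 1 - hi (f aᶜ))
      (a := aᶜ) (by simp only [compl_compl, N1_compl]; have := hf.N1_bounds a; omega)
    simpa only [compl_compl] using this
  rw [N1_compl] at hzeros
  have := N1_le b
  exact (hf a b).2 ⟨hones, by omega⟩

theorem naExpCost_interleave_le (hp : ∀ i, p i ∈ Set.Icc 0 1) (hc : ∀ i, c i = 1)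
    (hf : IsIntervalClassifier f lo hi) {σ : Equiv.Perm (Fin n)} (hσ : Antitone (p ∘ σ))
    {T : DTree n} (hT : T.Proper ∅) (hTf : ∀ a, T.eval a = f a) :
    naExpCost p c f (List.ofFn fun t => (interleave.symm.trans σ) t)
      ≤ 4 * ∑ a, T.cost c a * pr p a := by
  have hσ' : Monotone (p ∘ Fin.revPerm.trans σ) := fun _ _ h => hσ (Fin.rev_le_rev.2 h)
  have hones := sum_pr_mul_stopTime_le σ hp hσ hf.symmetricOn_lo hT
    fun a => (hf.le_ones_path hTf a).1
  have hzeros := sum_pr_mul_stopTime_compl_le _ hp hσ' hf.symmetricOn_hi_compl hT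
    fun a => by simpa only [compl_compl] using (hf.le_ones_path hTf a).2
  calc naExpCost p c f (List.ofFn fun t => (interleave.symm.trans σ) t)
      ≤ ∑ a, pr p a * (2 * (stopTime σ (fun a => lo (f a)) a : ℝ)
          + 2 * (stopTime (Fin.revPerm.trans σ) (fun a => n + 1 - hi (f aᶜ)) aᶜ : ℝ)) :=
        sum_le_sum fun a _ => by
          rw [mul_comm (pr p a)]
          exact mul_le_mul_of_nonneg_right (naCost_interleave_le hc hf σ a) (pr_nonneg hp a)
    _ = 2 * ∑ a, pr p a * (stopTime σ (fun a => lo (f a)) a : ℝ) + 2 * ∑ a, pr p a *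
          (stopTime (Fin.revPerm.trans σ) (fun a => n + 1 - hi (f aᶜ)) aᶜ : ℝ) := by
        simp only [mul_sum, ← sum_add_distrib]
        exact sum_congr rfl fun a _ => by ring
    _ ≤ 4 * ∑ a, T.cost c a * pr p a := by
        simp only [DTree.cost_eq_length hc, mul_comm _ (pr p _)]
        linarith

end Nonadaptive

theorem le_OPTcost {p c : Fin n → ℝ} {h : (Fin n → Bool) → ℕ} {x : ℝ}
    (hx : ∀ T : DTree n, T.Proper ∅ → (∀ a, T.eval a = h a) →
      x ≤ ∑ a, T.cost c a * pr p a) :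
    x ≤ OPTcost p c h := by
  obtain ⟨T, hT, hTh⟩ := DTree.exists_proper_eval h
  exact le_csInf ⟨_, T, hT, hTh, rfl⟩ fun _ ⟨T, hT, hTh, hy⟩ => hy ▸ hx T hT hTh

theorem exists_perm_naExpCost_le_four_mul_OPTcost {p c : Fin n → ℝ}
    (hp : ∀ i, p i ∈ Set.Icc 0 1) (hc : ∀ i, c i = 1) {f : (Fin n → Bool) → ℕ}
    {lo hi : ℕ → ℕ} (hf : IsIntervalClassifier f lo hi) :
    ∃ τ : Equiv.Perm (Fin n),
      naExpCost p c f (List.ofFn fun t => τ t) ≤ 4 * OPTcost p c f := by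
  set σ := Tuple.sort (OrderDual.toDual ∘ p)
  have hσ : Antitone (p ∘ σ) := fun _ _ hij => Tuple.monotone_sort (OrderDual.toDual ∘ p) hij
  refine ⟨interleave.symm.trans σ, ?_⟩
  have := le_OPTcost (p := p) (c := c) (h := f)
    (x := naExpCost p c f (List.ofFn fun t => (interleave.symm.trans σ) t) / 4)
    fun T hT hTf => by linarith [naExpCost_interleave_le hp hc hf hσ hT hTf]
  linarith

theorem isIntervalClassifier_of_cutoffs {f : (Fin n → Bool) → ℕ} {B : ℕ} {α : ℕ → ℕ}
    (hmono : ∀ j, 1 ≤ j → j ≤ B → α j < α (j + 1))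
    (hf : ∀ a, 1 ≤ f a ∧ f a ≤ B ∧ α (f a) ≤ N1 a ∧ N1 a < α (f a + 1)) :
    IsIntervalClassifier f α fun j => α (j + 1) := by
  have hα : MonotoneOn α (Set.Icc 1 (B + 1)) :=
    (strictMonoOn_of_lt_add_one Set.ordConnected_Icc fun j _ hj hj' =>
      hmono j hj.1 (by simpa using hj'.2)).monotoneOn
  intro a b
  refine ⟨fun h => h ▸ (hf b).2.2, fun ⟨hlo, (hhi : N1 b < α (f a + 1))⟩ => ?_⟩
  obtain ⟨ha₁, haB, -, -⟩ := hf a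
  obtain ⟨hb₁, hbB, hblo, hbhi⟩ := hf b
  by_contra hne
  rcases Nat.lt_or_gt_of_ne hne with h | h
  · have := hα ⟨by omega, by omega⟩ ⟨ha₁, by omega⟩ (by omega : f b + 1 ≤ f a)
    omega
  · have := hα ⟨by omega, by omega⟩ ⟨hb₁, by omega⟩ (by omega : f a + 1 ≤ f b)
    omega

end AdaptivityGap

theorem stmt7_general {n : ℕ} (p c : Fin n → ℝ)
    (hp : ∀ i, 0 < p i ∧ p i < 1) (hc : ∀ i, c i = 1)
    (B : ℕ) (α : ℕ → ℕ)
    (hmono : ∀ j, 1 ≤ j → j ≤ B → α j < α (j + 1))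
    (f : (Fin n → Bool) → ℕ)
    (hf : ∀ a, 1 ≤ f a ∧ f a ≤ B ∧ α (f a) ≤ N1 a ∧ N1 a < α (f a + 1)) :
    ∃ τ : Equiv.Perm (Fin n),
      naExpCost p c f (List.ofFn (fun t => τ t)) ≤ 4 * OPTcost p c f :=
  AdaptivityGap.exists_perm_naExpCost_le_four_mul_OPTcost
    (fun i => ⟨(hp i).1.le, (hp i).2.le⟩) hc
    (AdaptivityGap.isIntervalClassifier_of_cutoffs hmono hf)

theorem stmt7 {n : ℕ} (hn : 1 ≤ n) (p c : Fin n → ℝ)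
    (hp : ∀ i, 0 < p i ∧ p i < 1) (hc : ∀ i, c i = 1)
    (B : ℕ) (hB : 2 ≤ B) (α : ℕ → ℕ)
    (hα1 : α 1 = 0) (hαtop : α (B + 1) = n + 1)
    (hmono : ∀ j, 1 ≤ j → j ≤ B → α j < α (j + 1))
    (f : (Fin n → Bool) → ℕ)
    (hf : ∀ a, 1 ≤ f a ∧ f a ≤ B ∧ α (f a) ≤ N1 a ∧ N1 a < α (f a + 1)) :
    ∃ τ : Equiv.Perm (Fin n),
      naExpCost p c f (List.ofFn (fun t => τ t)) ≤ 4 * OPTcost p c f :=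
  stmt7_general p c hp hc B α hmono f hf
end

section
/- For arbitrary positive costs c, the expected nonadaptive cost of the modified round-robin permutation τ_MRR for evaluating the score classification function f is at most 2(B−1) times the minimum, over all permutations τ of Fin n, of the expected nonadaptive cost of τ for f. -/
open Finset

/-- The modified round-robin merge of Allen et al.: maintaining counters `C0`, `C1`,
repeatedly pick the next not-yet-chosen index of whichever order has smaller
counter-plus-next-cost (ties to the first list), and charge its cost to that counter. -/
noncomputable def mrrList {n : ℕ} (c : Fin n → ℝ) :
    List (Fin n) → List (Fin n) → ℝ → ℝ → List (Fin n)
  | [], l1, _, _ => l1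
  | j0 :: l0, [], _, _ => j0 :: l0
  | j0 :: l0, j1 :: l1, C0, C1 =>
    if C0 + c j0 ≤ C1 + c j1 then
      j0 :: mrrList c l0 ((j1 :: l1).filter (fun x => x ≠ j0)) (C0 + c j0) C1
    else
      j1 :: mrrList c ((j0 :: l0).filter (fun x => x ≠ j1)) l1 C0 (C1 + c j1)
  termination_by l0 l1 _ _ => l0.length + l1.length
  decreasing_by
    · have := List.length_filter_le (fun x => decide (x ≠ j0)) (j1 :: l1)
      simp only [List.length_cons] at *
      omega
    · have := List.length_filter_le (fun x => decide (x ≠ j1)) (j0 :: l0)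
      simp only [List.length_cons] at *
      omega

/-!
The class `f a` is determined by the `B - 1` threshold bits `α k ≤ N1 a`, `2 ≤ k ≤ B`, and
certifying the bit for `θ` means seeing `θ` ones or `n + 1 - θ` zeros. By an exchange argument
the expected cost of reading a list until `t` entries equal to `b` have been seen is minimised by
sorting by `c i / Pr[a i = b]`, that is along `l1` for ones and along `l0` for zeros; on the
side that is not certified the whole list is read in every order. So certifying one threshold
along `l1`/`l0` costs, in expectation, at most what any order `τ` pays, since `τ` has to certify
every threshold. On the other hand, on input `a` the round robin has read the certificate of
`f a` along `l1` and the one along `l0` within twice the larger of their costs, and these are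
bounded by the threshold costs at `k = f a` and `k = f a + 1`. Summing over the `B - 1`
thresholds gives the factor `2 (B - 1)`.
-/

open Function

section CostUntil

variable {ι : Type*}

-- The number of entries of `l` read until `t` entries `i` with `a i = b` have been seen
-- (all of `l` if there are fewer).
def stepsUntil (a : ι → Bool) (b : Bool) : ℕ → List ι → ℕ
  | _, [] => 0
  | 0, _ :: _ => 0
  | t + 1, i :: l => stepsUntil a b (if a i = b then t else t + 1) l + 1

noncomputable def costUntil (c : ι → ℝ) (a : ι → Bool) (b : Bool) (t : ℕ) (l : List ι) :
    ℝ :=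
  ((l.take (stepsUntil a b t l)).map c).sum

variable {c : ι → ℝ} {a a' : ι → Bool} {b : Bool} {t : ℕ} {i : ι} {l P : List ι}

lemma sum_map_nonneg (hc : ∀ i, 0 ≤ c i) (l : List ι) : 0 ≤ (l.map c).sum :=
  List.sum_nonneg fun _ hx => by obtain ⟨j, -, rfl⟩ := List.mem_map.1 hx; exact hc j

lemma sum_map_le_of_sublist (hc : ∀ i, 0 ≤ c i) {l₁ l₂ : List ι} (h : l₁.Sublist l₂) :
    (l₁.map c).sum ≤ (l₂.map c).sum :=
  (h.map c).sum_le_sum fun _ hx => by obtain ⟨j, -, rfl⟩ := List.mem_map.1 hx; exact hc j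

@[simp] lemma stepsUntil_nil : stepsUntil a b t [] = 0 := by cases t <;> rfl

@[simp] lemma stepsUntil_zero : stepsUntil a b 0 l = 0 := by cases l <;> rfl

lemma stepsUntil_succ_cons :
    stepsUntil a b (t + 1) (i :: l) = stepsUntil a b (if a i = b then t else t + 1) l + 1 := rfl

@[simp] lemma costUntil_nil : costUntil c a b t [] = 0 := by simp [costUntil]

@[simp] lemma costUntil_zero : costUntil c a b 0 l = 0 := by simp [costUntil]

lemma costUntil_succ_cons :
    costUntil c a b (t + 1) (i :: l) = c i + costUntil c a b (if a i = b then t else t + 1) l := by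
  simp [costUntil, stepsUntil_succ_cons]

lemma costUntil_nonneg (hc : ∀ i, 0 ≤ c i) : 0 ≤ costUntil c a b t l :=
  sum_map_nonneg hc _

lemma stepsUntil_congr (h : ∀ i ∈ l, a i = a' i) : stepsUntil a b t l = stepsUntil a' b t l := by
  induction l generalizing t with
  | nil => simp
  | cons i l ih =>
    cases t with
    | zero => simp
    | succ t =>
      simp only [stepsUntil_succ_cons, h i List.mem_cons_self,
        ih fun j hj => h j (List.mem_cons_of_mem i hj)]

lemma costUntil_congr (h : ∀ i ∈ l, a i = a' i) : costUntil c a b t l = costUntil c a' b t l := by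
  rw [costUntil, costUntil, stepsUntil_congr h]

lemma stepsUntil_le_of_le_countP_take {k : ℕ} (h : t ≤ (l.take k).countP (a · = b)) :
    stepsUntil a b t l ≤ k := by
  induction l generalizing t k with
  | nil => simp
  | cons i l ih =>
    cases t with
    | zero => simp
    | succ t =>
      cases k with
      | zero => simp at h
      | succ k =>
        rw [List.take_succ_cons, List.countP_cons] at h
        rw [stepsUntil_succ_cons]
        have := @ih (if a i = b then t else t + 1) k (by split_ifs at h ⊢ <;> simp_all)
        omega

lemma le_countP_take_stepsUntil (h : t ≤ l.countP (a · = b)) :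
    t ≤ (l.take (stepsUntil a b t l)).countP (a · = b) := by
  induction l generalizing t with
  | nil => simpa using h
  | cons i l ih =>
    cases t with
    | zero => simp
    | succ t =>
      rw [List.countP_cons] at h
      rw [stepsUntil_succ_cons, List.take_succ_cons, List.countP_cons]
      have := @ih (if a i = b then t else t + 1) (by split_ifs at h ⊢ <;> simp_all)
      split_ifs at this ⊢ <;> simp_all

lemma stepsUntil_eq_length_of_countP_lt (h : l.countP (a · = b) < t) :
    stepsUntil a b t l = l.length := by
  induction l generalizing t with
  | nil => simp
  | cons i l ih =>
    cases t with
    | zero => omega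
    | succ t =>
      rw [List.countP_cons] at h
      rw [stepsUntil_succ_cons, List.length_cons,
        ih (by split_ifs at h ⊢ <;> simp_all)]

lemma costUntil_eq_sum_of_countP_lt (h : l.countP (a · = b) < t) :
    costUntil c a b t l = (l.map c).sum := by
  rw [costUntil, stepsUntil_eq_length_of_countP_lt h, List.take_length]

lemma costUntil_le_of_prefix (hc : ∀ i, 0 ≤ c i) (hP : P <+: l)
    (h : t ≤ P.countP (a · = b)) : costUntil c a b t l ≤ (P.map c).sum := by
  rw [List.prefix_iff_eq_take.1 hP] at h ⊢
  exact sum_map_le_of_sublist hc (List.take_sublist_take_left (stepsUntil_le_of_le_countP_take h))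

end CostUntil

section Counting

variable {n : ℕ} {a b : Fin n → Bool} {P : List (Fin n)}

lemma countP_eq_card_toFinset_filter (hP : P.Nodup) (v : Bool) :
    P.countP (a · = v) = #{i ∈ P.toFinset | a i = v} := by
  rw [List.countP_eq_length_filter, ← List.toFinset_card_of_nodup (hP.filter _),
    List.toFinset_filter]
  simp

lemma countP_le_card_filter (hP : P.Nodup) (hab : ∀ i ∈ P, b i = a i) (v : Bool) :
    P.countP (a · = v) ≤ #{i | b i = v} := by
  rw [countP_eq_card_toFinset_filter hP]
  exact card_le_card fun i hi => by simp_all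

lemma countP_eq_card_filter (hP : P.Nodup) (hmem : ∀ i, i ∈ P) (v : Bool) :
    P.countP (a · = v) = #{i | a i = v} := by
  rw [countP_eq_card_toFinset_filter hP]
  congr
  ext i
  simp [hmem i]

lemma card_filter_ite_mem_eq_countP (hP : P.Nodup) (v : Bool) :
    #{i | (if i ∈ P then a i else !v) = v} = P.countP (a · = v) := by
  rw [countP_eq_card_toFinset_filter hP]
  congr 1
  ext i
  by_cases hi : i ∈ P <;> simp [hi]

lemma card_filter_false_add_N1 (a : Fin n → Bool) : #{i | a i = false} + N1 a = n := by
  simpa [N1, add_comm] using card_filter_add_card_filter_not (s := univ) (fun i => a i = true)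

end Counting

section Expectation

variable {n : ℕ} {p : Fin n → ℝ}

lemma sum_pr : ∑ a, pr p a = 1 := by
  simp only [pr, ← Fintype.prod_sum fun i (v : Bool) => if v then p i else 1 - p i,
    Fintype.sum_bool]
  simp

lemma pr_nonneg (hp : ∀ i, 0 ≤ p i ∧ p i ≤ 1) (a : Fin n → Bool) : 0 ≤ pr p a :=
  prod_nonneg fun i _ => by split <;> linarith [hp i]

lemma pr_update_mul (a : Fin n → Bool) (i : Fin n) (v : Bool) :
    pr p (update a i v) * (if a i then p i else 1 - p i)
      = pr p a * (if v then p i else 1 - p i) := by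
  have hrest : ∏ j ∈ univ.erase i, (if update a i v j then p j else 1 - p j)
      = ∏ j ∈ univ.erase i, (if a j then p j else 1 - p j) :=
    prod_congr rfl fun j hj => by rw [update_of_ne (ne_of_mem_erase hj)]
  rw [pr, pr, ← mul_prod_erase univ _ (mem_univ i), ← mul_prod_erase univ _ (mem_univ i), hrest,
    update_self]
  ring

lemma sum_ite_eq_mul_pr (i : Fin n) (v : Bool) {F : (Fin n → Bool) → ℝ}
    (hF : ∀ a w, F (update a i w) = F a) :
    ∑ a, (if a i = v then F a * pr p a else 0)
      = (if v then p i else 1 - p i) * ∑ a, F a * pr p a := by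
  set q : Bool → ℝ := fun w => if w then p i else 1 - p i with hq
  set S : Bool → ℝ := fun w => ∑ a, if a i = w then F a * pr p a else 0 with hS
  have htotal : ∑ a, F a * pr p a = S v + S (!v) := by
    rw [hS, ← sum_add_distrib]
    exact sum_congr rfl fun a _ => by cases a i <;> cases v <;> simp
  -- toggling coordinate `i` matches the two halves of the sum, up to the weights of `i`
  have hswap : q (!v) * S v = q v * S (!v) := by
    let σ : Equiv.Perm (Fin n → Bool) :=
      Involutive.toPerm (fun a => update a i (!a i)) fun a => by simp
    simp only [hS]
    rw [← Equiv.sum_comp σ, mul_sum, mul_sum]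
    refine sum_congr rfl fun a _ => ?_
    have hpr := pr_update_mul (p := p) a i (!a i)
    change q (!v) * (if update a i (!a i) i = v
      then F (update a i (!a i)) * pr p (update a i (!a i)) else 0) = _
    rw [update_self, hF]
    cases ha : a i <;> cases v <;> simp [ha, hq] at hpr ⊢ <;> linear_combination F a * hpr
  have hq1 : q v + q (!v) = 1 := by cases v <;> simp [hq]
  change S v = q v * _
  rw [htotal]
  linear_combination (-S v) * hq1 + hswap

lemma sum_ite_mul_pr (i : Fin n) (v : Bool) {F G : (Fin n → Bool) → ℝ}
    (hF : ∀ a w, F (update a i w) = F a) (hG : ∀ a w, G (update a i w) = G a) :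
    ∑ a, (if a i = v then F a else G a) * pr p a
      = (if v then p i else 1 - p i) * ∑ a, F a * pr p a
        + (1 - if v then p i else 1 - p i) * ∑ a, G a * pr p a := by
  have h1 : (1 - if v then p i else 1 - p i) = if !v then p i else 1 - p i := by cases v <;> simp
  rw [h1, ← sum_ite_eq_mul_pr i v hF, ← sum_ite_eq_mul_pr i (!v) hG, ← sum_add_distrib]
  exact sum_congr rfl fun a _ => by cases a i <;> cases v <;> simp

end Expectation

section ExpCostUntil

variable {ι : Type*} {c q : ι → ℝ} {t : ℕ} {i x y : ι} {l M M' : List ι}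

-- The expectation of `costUntil c · b t l` when `a i = b` independently with probability `q i`.
noncomputable def expCostUntil (c q : ι → ℝ) : ℕ → List ι → ℝ
  | _, [] => 0
  | 0, _ :: _ => 0
  | t + 1, i :: l => c i + q i * expCostUntil c q t l + (1 - q i) * expCostUntil c q (t + 1) l

@[simp] lemma expCostUntil_nil : expCostUntil c q t [] = 0 := by cases t <;> rfl

@[simp] lemma expCostUntil_zero : expCostUntil c q 0 l = 0 := by cases l <;> rfl

lemma expCostUntil_succ_cons : expCostUntil c q (t + 1) (i :: l)
    = c i + q i * expCostUntil c q t l + (1 - q i) * expCostUntil c q (t + 1) l := rfl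

lemma expCostUntil_swap_le (hxy : c x * q y ≤ c y * q x) (S : List ι) (t : ℕ) :
    expCostUntil c q t (x :: y :: S) ≤ expCostUntil c q t (y :: x :: S) := by
  match t with
  | 0 => simp
  | 1 =>
    simp only [expCostUntil_succ_cons, expCostUntil_zero]
    nlinarith
  -- for `t ≥ 2` both `x` and `y` are always read, so their order is irrelevant
  | t + 2 => exact le_of_eq (by simp only [expCostUntil_succ_cons]; ring)

variable (hq : ∀ i, 0 ≤ q i ∧ q i ≤ 1)
include hq

lemma expCostUntil_cons_mono (h : ∀ t, expCostUntil c q t M ≤ expCostUntil c q t M') (t : ℕ) :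
    expCostUntil c q t (i :: M) ≤ expCostUntil c q t (i :: M') := by
  cases t with
  | zero => simp
  | succ t =>
    simp only [expCostUntil_succ_cons]
    have := hq i
    nlinarith [h t, h (t + 1)]

lemma expCostUntil_cons_erase_le [DecidableEq ι] (hx : x ∈ l)
    (hmin : ∀ y ∈ l, c x * q y ≤ c y * q x) (t : ℕ) :
    expCostUntil c q t (x :: l.erase x) ≤ expCostUntil c q t l := by
  induction l generalizing t with
  | nil => cases hx
  | cons y l ih =>
    by_cases hxy : x = y
    · subst hxy
      rw [List.erase_cons_head]
    · have hxl : x ∈ l := (List.mem_cons.1 hx).resolve_left hxy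
      rw [List.erase_cons_tail (by simp [Ne.symm hxy])]
      calc expCostUntil c q t (x :: y :: l.erase x)
          ≤ expCostUntil c q t (y :: x :: l.erase x) :=
            expCostUntil_swap_le (hmin y List.mem_cons_self) _ t
        _ ≤ expCostUntil c q t (y :: l) :=
            expCostUntil_cons_mono hq (ih hxl fun z hz => hmin z (List.mem_cons_of_mem y hz)) t

lemma expCostUntil_le_of_pairwise_of_perm (hl : l.Pairwise fun i j => c i * q j ≤ c j * q i)
    {L : List ι} (hperm : l.Perm L) (t : ℕ) : expCostUntil c q t l ≤ expCostUntil c q t L := by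
  classical
  induction l generalizing L t with
  | nil => rw [hperm.nil_eq]
  | cons x l ih =>
    obtain ⟨hxl, hl⟩ := List.pairwise_cons.1 hl
    have hx : x ∈ L := hperm.subset List.mem_cons_self
    have hmin : ∀ y ∈ L, c x * q y ≤ c y * q x := by
      intro y hy
      rcases List.mem_cons.1 (hperm.symm.subset hy) with rfl | hy
      · exact le_rfl
      · exact hxl y hy
    calc expCostUntil c q t (x :: l)
        ≤ expCostUntil c q t (x :: L.erase x) :=
          expCostUntil_cons_mono hq (ih hl ((List.perm_cons x).1
            (hperm.trans (List.perm_cons_erase hx)))) t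
      _ ≤ expCostUntil c q t L := expCostUntil_cons_erase_le hq hx hmin t

end ExpCostUntil

section RoundRobin

variable {ι : Type*} {c : ι → ℝ} {L u v : List ι} {C₀ C₁ : ℝ}

def Covers (c : ι → ℝ) (L u v : List ι) (C₀ C₁ : ℝ) : Prop :=
  ∀ P₀ P₁, P₀ <+: u → P₁ <+: v → ∃ Q, Q <+: L ∧ P₀ ⊆ Q ∧ P₁ ⊆ Q ∧
    C₀ + C₁ + (Q.map c).sum ≤ 2 * max (C₀ + (P₀.map c).sum) (C₁ + (P₁.map c).sum)

lemma Covers.symm (h : Covers c L u v C₀ C₁) : Covers c L v u C₁ C₀ := fun P₁ P₀ hP₁ hP₀ => by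
  obtain ⟨Q, hQ, h₀, h₁, hcost⟩ := h P₀ P₁ hP₀ hP₁
  exact ⟨Q, hQ, h₁, h₀, by rw [max_comm]; linarith⟩

lemma covers_nil_left : Covers c v [] v C₀ C₁ := fun P₀ P₁ hP₀ hP₁ => by
  obtain rfl := List.prefix_nil.1 hP₀
  refine ⟨P₁, hP₁, by simp, List.Subset.refl _, ?_⟩
  simp only [List.map_nil, List.sum_nil, add_zero]
  linarith [le_max_left C₀ (C₁ + (P₁.map c).sum), le_max_right C₀ (C₁ + (P₁.map c).sum)]

lemma covers_nil_right : Covers c u u [] C₀ C₁ := covers_nil_left.symm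

lemma covers_cons [DecidableEq ι] (hc : ∀ i, 0 ≤ c i) {j w : ι} (hle : C₀ + c j ≤ C₁ + c w)
    (h : Covers c L u ((w :: v).filter fun x => x ≠ j) (C₀ + c j) C₁) :
    Covers c (j :: L) (j :: u) (w :: v) C₀ C₁ := by
  intro P₀ P₁ hP₀ hP₁
  set M := max (C₀ + (P₀.map c).sum) (C₁ + (P₁.map c).sum)
  have step : ∀ P₀', P₀' <+: u → P₀ ⊆ j :: P₀' → C₀ + c j + (P₀'.map c).sum ≤ M →
      ∃ Q, Q <+: j :: L ∧ P₀ ⊆ Q ∧ P₁ ⊆ Q ∧ C₀ + C₁ + (Q.map c).sum ≤ 2 * M := by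
    intro P₀' hP₀' hsub hbound
    obtain ⟨Q, hQ, h₀, h₁, hcost⟩ := h P₀' (P₁.filter fun x => x ≠ j) hP₀' (hP₁.filter _)
    have hfilter : ((P₁.filter fun x => x ≠ j).map c).sum ≤ (P₁.map c).sum :=
      sum_map_le_of_sublist hc List.filter_sublist
    refine ⟨j :: Q, List.cons_prefix_cons.2 ⟨rfl, hQ⟩,
      List.Subset.trans hsub (List.cons_subset_cons j h₀), fun x hx => ?_, ?_⟩
    · by_cases hxj : x = j
      · exact hxj ▸ List.mem_cons_self
      · exact List.mem_cons_of_mem j (h₁ (List.mem_filter.2 ⟨hx, by simpa using hxj⟩))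
    · have : max (C₀ + c j + (P₀'.map c).sum) (C₁ + ((P₁.filter fun x => x ≠ j).map c).sum) ≤ M :=
        max_le hbound (by linarith [le_max_right (C₀ + (P₀.map c).sum) (C₁ + (P₁.map c).sum)])
      simp only [List.map_cons, List.sum_cons]
      linarith
  rcases List.prefix_cons_iff.1 hP₀ with rfl | ⟨P₀', rfl, hP₀'⟩
  · rcases List.prefix_cons_iff.1 hP₁ with rfl | ⟨P₁', rfl, -⟩
    · refine ⟨[], List.nil_prefix, List.Subset.refl _, List.Subset.refl _, ?_⟩
      simp only [M, List.map_nil, List.sum_nil, add_zero]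
      linarith [le_max_left C₀ C₁, le_max_right C₀ C₁]
    · -- the rule that picked `j` gives `C₀ + c j ≤ C₁ + c w ≤ C₁ + cost P₁`
      refine step [] List.nil_prefix (List.nil_subset _) ?_
      have := sum_map_nonneg hc P₁'
      simp only [M, List.map_nil, List.map_cons, List.sum_nil, List.sum_cons, add_zero]
      linarith [le_max_right C₀ (C₁ + (c w + (P₁'.map c).sum))]
  · refine step P₀' hP₀' (List.Subset.refl _) ?_
    simp only [M, List.map_cons, List.sum_cons, ← add_assoc]
    exact le_max_left _ _

end RoundRobin

lemma covers_mrrList {n : ℕ} {c : Fin n → ℝ} (hc : ∀ i, 0 ≤ c i) (u v : List (Fin n))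
    (C₀ C₁ : ℝ) :
    Covers c (mrrList c u v C₀ C₁) u v C₀ C₁ := by
  fun_induction mrrList c u v C₀ C₁ with
  | case1 => exact covers_nil_left
  | case2 => exact covers_nil_right
  | case3 j₀ u j₁ v C₀ C₁ hle ih => exact covers_cons hc hle ih
  | case4 j₀ u j₁ v C₀ C₁ hlt ih => exact (covers_cons hc (not_le.1 hlt).le ih.symm).symm

section Certificates

variable {n : ℕ} {c : Fin n → ℝ} {h : (Fin n → Bool) → ℕ} {a : Fin n → Bool} {l Q : List (Fin n)}

def Certifies (h : (Fin n → Bool) → ℕ) (a : Fin n → Bool) (P : List (Fin n)) : Prop :=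
  ∀ b : Fin n → Bool, (∀ i ∈ P, b i = a i) → h b = h a

lemma naCost_le_of_certifies (hc : ∀ i, 0 ≤ c i) (hQ : Q <+: l) (hcert : Certifies h a Q) :
    naCost c h a l ≤ (Q.map c).sum := by
  rw [List.prefix_iff_eq_take.1 hQ] at hcert ⊢
  exact sum_map_le_of_sublist hc (List.take_sublist_take_left (Nat.sInf_le hcert))

lemma exists_certifies_naCost_eq (hl : ∀ i, i ∈ l) :
    ∃ P, P <+: l ∧ Certifies h a P ∧ naCost c h a l = (P.map c).sum := by
  have hne : {k | Certifies h a (l.take k)}.Nonempty :=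
    ⟨l.length, fun b hb => by
      rw [List.take_length] at hb
      rw [funext fun i => hb i (hl i)]⟩
  exact ⟨_, List.take_prefix _ l, Nat.sInf_mem hne, rfl⟩

end Certificates

section ScoreClass

variable {n B : ℕ} {α : ℕ → ℕ} {f : (Fin n → Bool) → ℕ} {a b : Fin n → Bool} {P Q : List (Fin n)}

lemma α_le_of_le (hmono : ∀ j, 1 ≤ j → j ≤ B → α j < α (j + 1)) {i j : ℕ}
    (hi : 1 ≤ i) (hij : i ≤ j) (hj : j ≤ B + 1) : α i ≤ α j := by
  have : MonotoneOn α (Set.Icc 1 (B + 1)) :=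
    monotoneOn_of_le_succ Set.ordConnected_Icc fun k _ hk hk' =>
      (hmono k hk.1 (by simp only [Set.mem_Icc, Order.succ_eq_add_one] at hk'; omega)).le
  exact this ⟨hi, hij.trans hj⟩ ⟨hi.trans hij, hj⟩ hij

section Necessity

variable (hf : ∀ a, 1 ≤ f a ∧ f a ≤ B ∧ α (f a) ≤ N1 a ∧ N1 a < α (f a + 1))
include hf

/-- Completing `a` off `P` by all zeros, resp. all ones, shows what `P` must contain. -/
lemma le_countP_of_certifies (hP : P.Nodup) (hcert : Certifies f a P) :
    α (f a) ≤ P.countP (a · = true) ∧ n + 1 - α (f a + 1) ≤ P.countP (a · = false) := by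
  constructor
  · have hb := (hf fun i => if i ∈ P then a i else !true).2.2.1
    rw [hcert _ fun i hi => if_pos hi] at hb
    have := card_filter_ite_mem_eq_countP (a := a) hP true
    exact hb.trans this.le
  · have hb := (hf fun i => if i ∈ P then a i else !false).2.2.2
    rw [hcert _ fun i hi => if_pos hi] at hb
    have := card_filter_ite_mem_eq_countP (a := a) hP false
    have := card_filter_false_add_N1 fun i => if i ∈ P then a i else !false
    omega

end Necessity

variable (hmono : ∀ j, 1 ≤ j → j ≤ B → α j < α (j + 1))
  (hf : ∀ a, 1 ≤ f a ∧ f a ≤ B ∧ α (f a) ≤ N1 a ∧ N1 a < α (f a + 1))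
include hmono hf

lemma le_f_iff {k : ℕ} (hk : 1 ≤ k) (hkB : k ≤ B + 1) : k ≤ f a ↔ α k ≤ N1 a := by
  obtain ⟨h1, hB, hlow, hup⟩ := hf a
  constructor
  · intro hkf
    exact (α_le_of_le hmono hk hkf (by omega)).trans hlow
  · intro hαk
    by_contra! hfk
    have := α_le_of_le hmono (i := f a + 1) (by omega) hfk hkB
    omega

lemma f_eq_of_bounds (hlow : α (f a) ≤ N1 b) (hup : N1 b < α (f a + 1)) : f b = f a := by
  obtain ⟨ha1, haB, -⟩ := hf a
  have h1 : f a ≤ f b := (le_f_iff hmono hf ha1 (by omega)).2 hlow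
  have h2 : ¬ f a + 1 ≤ f b := fun h => by
    have := (le_f_iff hmono hf (by omega) (by omega)).1 h
    omega
  omega

lemma certifies_of_le_countP (hαtop : α (B + 1) = n + 1) {P₁ P₀ : List (Fin n)}
    (hP₁ : P₁.Nodup) (hP₀ : P₀.Nodup) (hsub₁ : P₁ ⊆ Q) (hsub₀ : P₀ ⊆ Q)
    (h₁ : α (f a) ≤ P₁.countP (a · = true))
    (h₀ : n + 1 - α (f a + 1) ≤ P₀.countP (a · = false)) :
    Certifies f a Q := by
  intro b hb
  have hones : P₁.countP (a · = true) ≤ N1 b :=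
    countP_le_card_filter hP₁ (fun i hi => hb i (hsub₁ hi)) true
  have hzeros := countP_le_card_filter hP₀ (fun i hi => hb i (hsub₀ hi)) false
  have := card_filter_false_add_N1 b
  have : α (f a + 1) ≤ n + 1 :=
    hαtop ▸ α_le_of_le hmono (by omega) (by have := (hf a).2.1; omega) le_rfl
  exact f_eq_of_bounds hmono hf (h₁.trans hones) (by omega)

end ScoreClass

section Thresholds

variable {n : ℕ} {p c : Fin n → ℝ} {b : Bool} {l l₁ l₀ T : List (Fin n)}

lemma sum_costUntil_mul_pr (hl : l.Nodup) (t : ℕ) :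
    ∑ a, costUntil c a b t l * pr p a
      = expCostUntil c (fun i => if b then p i else 1 - p i) t l := by
  induction l generalizing t with
  | nil => simp
  | cons i l ih =>
    obtain ⟨hil, hl⟩ := List.nodup_cons.1 hl
    cases t with
    | zero => simp
    | succ t =>
      have hindep : ∀ s a w, costUntil c (update a i w) b s l = costUntil c a b s l :=
        fun s a w => costUntil_congr fun j hj => update_of_ne (by rintro rfl; exact hil hj) _ _
      have hsplit : ∀ a, costUntil c a b (t + 1) (i :: l) * pr p a = c i * pr p a
          + (if a i = b then costUntil c a b t l else costUntil c a b (t + 1) l) * pr p a := by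
        intro a
        rw [costUntil_succ_cons]
        split_ifs <;> ring
      simp only [hsplit, sum_add_distrib, ← mul_sum, sum_pr, mul_one]
      rw [sum_ite_mul_pr (F := fun a => costUntil c a b t l) i b (hindep t) (hindep (t + 1)),
        ih hl, ih hl, expCostUntil_succ_cons, add_assoc]

/-- The nonadaptive cost of the threshold function `θ ≤ N1 a` when a certificate of value `1`
(`θ` ones) is searched along `l₁` and one of value `0` (`n + 1 - θ` zeros) along `l₀`. -/
noncomputable def thresholdCost (c : Fin n → ℝ) (θ : ℕ) (l₁ l₀ : List (Fin n))
    (a : Fin n → Bool) : ℝ :=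
  if θ ≤ N1 a then costUntil c a true θ l₁ else costUntil c a false (n + 1 - θ) l₀

lemma sum_map_eq_sum_univ (hl : l.Nodup) (hmem : ∀ i, i ∈ l) : (l.map c).sum = ∑ i, c i := by
  rw [← List.sum_toFinset c hl]
  congr
  ext i
  simp [hmem i]

/-- On the side that is not certified the whole list is read, whatever the order. -/
lemma thresholdCost_eq (hl₁ : l₁.Nodup) (hl₁' : ∀ i, i ∈ l₁) (hl₀ : l₀.Nodup) (hl₀' : ∀ i, i ∈ l₀)
    (θ : ℕ) (a : Fin n → Bool) :
    thresholdCost c θ l₁ l₀ a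
      = costUntil c a true θ l₁ + costUntil c a false (n + 1 - θ) l₀ - ∑ i, c i := by
  have hones : l₁.countP (a · = true) = N1 a := countP_eq_card_filter hl₁ hl₁' true
  have hzeros := countP_eq_card_filter (a := a) hl₀ hl₀' false
  have := card_filter_false_add_N1 a
  unfold thresholdCost
  split_ifs with hθ
  · rw [costUntil_eq_sum_of_countP_lt (l := l₀) (by omega), sum_map_eq_sum_univ hl₀ hl₀']
    ring
  · rw [costUntil_eq_sum_of_countP_lt (l := l₁) (by omega), sum_map_eq_sum_univ hl₁ hl₁']
    ring

lemma sum_costUntil_mul_pr_le (hp : ∀ i, 0 ≤ p i ∧ p i ≤ 1) (hl : l.Nodup)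
    (hT : T.Nodup) (hperm : l.Perm T)
    (hsorted : l.Pairwise fun i j =>
      c i * (if b then p j else 1 - p j) ≤ c j * (if b then p i else 1 - p i)) (t : ℕ) :
    ∑ a, costUntil c a b t l * pr p a ≤ ∑ a, costUntil c a b t T * pr p a := by
  rw [sum_costUntil_mul_pr hl, sum_costUntil_mul_pr hT]
  exact expCostUntil_le_of_pairwise_of_perm
    (fun i => by cases b <;> simp <;> constructor <;> linarith [hp i])
    hsorted hperm t

lemma sum_thresholdCost_le (hp : ∀ i, 0 < p i ∧ p i < 1)
    (hl₁ : l₁.Nodup ∧ (∀ i, i ∈ l₁) ∧ l₁.Pairwise (fun i j => c i / p i ≤ c j / p j))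
    (hl₀ : l₀.Nodup ∧ (∀ i, i ∈ l₀) ∧
      l₀.Pairwise (fun i j => c i / (1 - p i) ≤ c j / (1 - p j)))
    (hT : T.Nodup) (hT' : ∀ i, i ∈ T) (θ : ℕ) :
    ∑ a, thresholdCost c θ l₁ l₀ a * pr p a ≤ ∑ a, thresholdCost c θ T T a * pr p a := by
  obtain ⟨hl₁, hl₁', hs₁⟩ := hl₁
  obtain ⟨hl₀, hl₀', hs₀⟩ := hl₀
  have hp' : ∀ i, 0 ≤ p i ∧ p i ≤ 1 := fun i => ⟨(hp i).1.le, (hp i).2.le⟩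
  have hperm : ∀ {l : List (Fin n)}, l.Nodup → (∀ i, i ∈ l) → l.Perm T := fun hl hl' =>
    (List.perm_ext_iff_of_nodup hl hT).2 fun i => by simp [hl' i, hT' i]
  have h₁ := sum_costUntil_mul_pr_le hp' (b := true) hl₁ hT (hperm hl₁ hl₁')
    (hs₁.imp fun h => by simpa using (div_le_div_iff₀ (hp _).1 (hp _).1).1 h) θ
  have h₀ := sum_costUntil_mul_pr_le hp' (b := false) hl₀ hT (hperm hl₀ hl₀')
    (hs₀.imp fun {i j} h => by
      simpa using (div_le_div_iff₀ (sub_pos.2 (hp i).2) (sub_pos.2 (hp j).2)).1 h) (n + 1 - θ)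
  simp only [thresholdCost_eq hl₁ hl₁' hl₀ hl₀', thresholdCost_eq hT hT' hT hT', sub_mul, add_mul,
    sum_sub_distrib, sum_add_distrib]
  linarith

end Thresholds

section Bounds

variable {n B : ℕ} {α : ℕ → ℕ} {f : (Fin n → Bool) → ℕ} {c : Fin n → ℝ} {l₁ l₀ T : List (Fin n)}

lemma thresholdCost_le_naCost (hc : ∀ i, 0 ≤ c i) (hmono : ∀ j, 1 ≤ j → j ≤ B → α j < α (j + 1))
    (hf : ∀ a, 1 ≤ f a ∧ f a ≤ B ∧ α (f a) ≤ N1 a ∧ N1 a < α (f a + 1))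
    (hT : T.Nodup) (hT' : ∀ i, i ∈ T) {k : ℕ} (hk : 1 ≤ k) (hkB : k ≤ B + 1) (a : Fin n → Bool) :
    thresholdCost c (α k) T T a ≤ naCost c f a T := by
  obtain ⟨P, hPT, hcert, hcost⟩ := exists_certifies_naCost_eq (c := c) (a := a) hT'
  obtain ⟨hones, hzeros⟩ := le_countP_of_certifies hf (hT.sublist hPT.sublist) hcert
  have := (hf a).2.1
  rw [hcost, thresholdCost]
  split_ifs with hθ
  · have hkf := (le_f_iff hmono hf hk hkB).2 hθ
    exact costUntil_le_of_prefix hc hPT ((α_le_of_le hmono hk hkf (by omega)).trans hones)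
  · have hfk : f a + 1 ≤ k := not_le.1 (mt (le_f_iff hmono hf hk hkB).1 hθ)
    have := α_le_of_le hmono (by omega) hfk hkB
    exact costUntil_le_of_prefix hc hPT (le_trans (by omega) hzeros)

lemma naCost_mrrList_le (hc : ∀ i, 0 ≤ c i) (hmono : ∀ j, 1 ≤ j → j ≤ B → α j < α (j + 1))
    (hαtop : α (B + 1) = n + 1)
    (hf : ∀ a, 1 ≤ f a ∧ f a ≤ B ∧ α (f a) ≤ N1 a ∧ N1 a < α (f a + 1))
    (hl₁ : l₁.Nodup) (hl₁' : ∀ i, i ∈ l₁) (hl₀ : l₀.Nodup) (hl₀' : ∀ i, i ∈ l₀) (a : Fin n → Bool) :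
    naCost c f a (mrrList c l₀ l₁ 0 0)
      ≤ 2 * (costUntil c a true (α (f a)) l₁ + costUntil c a false (n + 1 - α (f a + 1)) l₀) := by
  set P₁ := l₁.take (stepsUntil a true (α (f a)) l₁)
  set P₀ := l₀.take (stepsUntil a false (n + 1 - α (f a + 1)) l₀)
  obtain ⟨Q, hQ, h₀, h₁, hcost⟩ :=
    covers_mrrList hc l₀ l₁ 0 0 P₀ P₁ (List.take_prefix _ _) (List.take_prefix _ _)
  have hones : α (f a) ≤ P₁.countP (a · = true) :=
    le_countP_take_stepsUntil (by rw [countP_eq_card_filter hl₁ hl₁']; exact (hf a).2.2.1)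
  have hzeros : n + 1 - α (f a + 1) ≤ P₀.countP (a · = false) := by
    refine le_countP_take_stepsUntil ?_
    rw [countP_eq_card_filter hl₀ hl₀']
    have := card_filter_false_add_N1 a
    have := (hf a).2.2.2
    omega
  have hcert := certifies_of_le_countP hmono hf hαtop (hl₁.sublist (List.take_sublist _ _))
    (hl₀.sublist (List.take_sublist _ _)) h₁ h₀ hones hzeros
  have hP₁ : 0 ≤ (P₁.map c).sum := sum_map_nonneg hc _
  have hP₀ : 0 ≤ (P₀.map c).sum := sum_map_nonneg hc _
  calc naCost c f a (mrrList c l₀ l₁ 0 0) ≤ (Q.map c).sum := naCost_le_of_certifies hc hQ hcert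
    _ ≤ 2 * max (P₀.map c).sum (P₁.map c).sum := by simpa using hcost
    _ ≤ 2 * ((P₁.map c).sum + (P₀.map c).sum) := by
      gcongr
      exact max_le (by linarith) (by linarith)

lemma costUntil_add_costUntil_le_sum_thresholdCost (hc : ∀ i, 0 ≤ c i) (hα1 : α 1 = 0)
    (hαtop : α (B + 1) = n + 1)
    (hf : ∀ a, 1 ≤ f a ∧ f a ≤ B ∧ α (f a) ≤ N1 a ∧ N1 a < α (f a + 1)) (a : Fin n → Bool) :
    costUntil c a true (α (f a)) l₁ + costUntil c a false (n + 1 - α (f a + 1)) l₀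
      ≤ ∑ k ∈ Icc 2 B, thresholdCost c (α k) l₁ l₀ a := by
  have hnonneg : ∀ k ∈ Icc 2 B, 0 ≤ thresholdCost c (α k) l₁ l₀ a := fun k _ => by
    unfold thresholdCost
    split_ifs <;> exact costUntil_nonneg hc
  obtain ⟨ha1, haB, hlow, hup⟩ := hf a
  rw [← sum_filter_add_sum_filter_not (Icc 2 B) (· ≤ f a)]
  gcongr ?_ + ?_
  · rcases (show f a = 1 ∨ 2 ≤ f a by omega) with h | h
    · rw [h, hα1, costUntil_zero]
      exact sum_nonneg fun k hk => hnonneg k (mem_filter.1 hk).1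
    · have hmem : f a ∈ (Icc 2 B).filter (· ≤ f a) := by simp [h, haB]
      refine le_of_eq_of_le ?_ (single_le_sum (fun k hk => hnonneg k (mem_filter.1 hk).1) hmem)
      rw [thresholdCost, if_pos hlow]
  · rcases (show f a = B ∨ f a + 1 ≤ B by omega) with h | h
    · rw [h, hαtop, Nat.sub_self, costUntil_zero]
      exact sum_nonneg fun k hk => hnonneg k (mem_filter.1 hk).1
    · have hmem : f a + 1 ∈ (Icc 2 B).filter (¬ · ≤ f a) := by simp [h]; omega
      refine le_of_eq_of_le ?_ (single_le_sum (fun k hk => hnonneg k (mem_filter.1 hk).1) hmem)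
      rw [thresholdCost, if_neg (not_le.2 hup)]

end Bounds

theorem stmt9_general {n : ℕ} (p c : Fin n → ℝ)
    (hp : ∀ i, 0 < p i ∧ p i < 1) (hc : ∀ i, 0 < c i)
    (B : ℕ) (hB : 2 ≤ B) (α : ℕ → ℕ)
    (hα1 : α 1 = 0) (hαtop : α (B + 1) = n + 1)
    (hmono : ∀ j, 1 ≤ j → j ≤ B → α j < α (j + 1))
    (f : (Fin n → Bool) → ℕ)
    (hf : ∀ a, 1 ≤ f a ∧ f a ≤ B ∧ α (f a) ≤ N1 a ∧ N1 a < α (f a + 1))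
    (l1 l0 : List (Fin n))
    (hl1 : l1.Nodup ∧ (∀ i, i ∈ l1) ∧
      l1.Pairwise (fun i j => c i / p i ≤ c j / p j))
    (hl0 : l0.Nodup ∧ (∀ i, i ∈ l0) ∧
      l0.Pairwise (fun i j => c i / (1 - p i) ≤ c j / (1 - p j))) :
    ∀ τ : Equiv.Perm (Fin n),
      naExpCost p c f (mrrList c l0 l1 0 0) ≤
        2 * ((B : ℝ) - 1) * naExpCost p c f (List.ofFn (fun t => τ t)) := by
  intro τ
  set T := List.ofFn fun t => τ t
  have hT : T.Nodup := List.nodup_ofFn.2 τ.injective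
  have hT' : ∀ i, i ∈ T := fun i => List.mem_ofFn.2 ⟨τ.symm i, τ.apply_symm_apply i⟩
  have hc' : ∀ i, 0 ≤ c i := fun i => (hc i).le
  have hpr : ∀ a, 0 ≤ pr p a := pr_nonneg fun i => ⟨(hp i).1.le, (hp i).2.le⟩
  calc naExpCost p c f (mrrList c l0 l1 0 0)
      ≤ ∑ a, (2 * ∑ k ∈ Icc 2 B, thresholdCost c (α k) l1 l0 a) * pr p a := by
        refine sum_le_sum fun a _ => mul_le_mul_of_nonneg_right ?_ (hpr a)
        have := naCost_mrrList_le hc' hmono hαtop hf hl1.1 hl1.2.1 hl0.1 hl0.2.1 a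
        have := costUntil_add_costUntil_le_sum_thresholdCost (l₁ := l1) (l₀ := l0)
          hc' hα1 hαtop hf a
        linarith
    _ = 2 * ∑ k ∈ Icc 2 B, ∑ a, thresholdCost c (α k) l1 l0 a * pr p a := by
        simp_rw [mul_assoc, ← mul_sum, sum_mul]
        rw [sum_comm]
    _ ≤ 2 * ∑ k ∈ Icc 2 B, ∑ a, thresholdCost c (α k) T T a * pr p a := by
        gcongr 2 * ∑ k ∈ _, ?_
        exact sum_thresholdCost_le hp hl1 hl0 hT hT' _
    _ ≤ 2 * ∑ k ∈ Icc 2 B, naExpCost p c f T := by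
        gcongr with k hk
        refine sum_le_sum fun a _ => mul_le_mul_of_nonneg_right ?_ (hpr a)
        exact thresholdCost_le_naCost hc' hmono hf hT hT' (by simp at hk; omega)
          (by simp at hk; omega) a
    _ = 2 * ((B : ℝ) - 1) * naExpCost p c f T := by
        rw [sum_const, Nat.card_Icc, nsmul_eq_mul, Nat.cast_sub (by omega)]
        push_cast
        ring

theorem stmt9 {n : ℕ} (hn : 1 ≤ n) (p c : Fin n → ℝ)
    (hp : ∀ i, 0 < p i ∧ p i < 1) (hc : ∀ i, 0 < c i)
    (B : ℕ) (hB : 2 ≤ B) (α : ℕ → ℕ)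
    (hα1 : α 1 = 0) (hαtop : α (B + 1) = n + 1)
    (hmono : ∀ j, 1 ≤ j → j ≤ B → α j < α (j + 1))
    (f : (Fin n → Bool) → ℕ)
    (hf : ∀ a, 1 ≤ f a ∧ f a ≤ B ∧ α (f a) ≤ N1 a ∧ N1 a < α (f a + 1))
    (l1 l0 : List (Fin n))
    (hl1 : l1.Nodup ∧ (∀ i, i ∈ l1) ∧
      l1.Pairwise (fun i j => c i / p i ≤ c j / p j))
    (hl0 : l0.Nodup ∧ (∀ i, i ∈ l0) ∧
      l0.Pairwise (fun i j => c i / (1 - p i) ≤ c j / (1 - p j))) :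
    ∀ τ : Equiv.Perm (Fin n),
      naExpCost p c f (mrrList c l0 l1 0 0) ≤
        2 * ((B : ℝ) - 1) * naExpCost p c f (List.ofFn (fun t => τ t)) :=
  stmt9_general p c hp hc B hB α hα1 hαtop hmono f hf l1 l0 hl1 hl0
end
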